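/- arXiv:1604.03030 — 11 statements merged into one kernel-verified Lean document; each statement's English description precedes it below -/
import Mathlib

section
/- For all sufficiently large n and any real numbers k, q with k ≥ √n and k = q·log^1000 n (asymptotically), with A = 4n²·log n / k, the probability that a uniformly random k-tuple of points in the n×n grid leaves at least √(kq) blocks empty in a fixed partition of the grid into n²/A equal-area blocks is at most 2^{-q·log^{501} n}. -/
/-!
A tuple that misses at least `s` blocks misses some fixed set of `s` blocks, and a fixed set of `s`
blocks is missed with probability `(1 - s/m)^k`. The union bound over the `C(m, s) ≤ m^s` choices
gives at most `m^s e^{-sk/m}`. Here `k/m = 4 log₂ n` and `m ≤ n²`, so this is at most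
`2^{2s log₂ n} e^{-4s log₂ n} ≤ 2^{-2s log₂ n}`, and `s ≥ √(kq) = q log₂^{500} n`.
-/

open Finset Real

section MissedBlocks

variable {ι α β : Type*} [Fintype ι] [DecidableEq ι] [Fintype α] [Fintype β] [DecidableEq β]

def missedBlocks (block : α → β) (f : ι → α) : Finset β := {b | ∀ i, block (f i) ≠ b}

def tuplesMissingAtLeast (block : α → β) (s : ℕ) : Finset (ι → α) :=
  {f | s ≤ #(missedBlocks block f)}

theorem card_tuplesMissingAtLeast_le_sum (block : α → β) (s : ℕ) :
    #(tuplesMissingAtLeast (ι := ι) block s) ≤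
      ∑ S ∈ powersetCard s (univ : Finset β), #{a | block a ∉ S} ^ Fintype.card ι := by
  classical
  calc #(tuplesMissingAtLeast (ι := ι) block s)
      ≤ #((powersetCard s univ).biUnion
          fun S => Fintype.piFinset fun _ : ι => ({a | block a ∉ S} : Finset α)) := by
        refine card_le_card fun f hf => ?_
        obtain ⟨S, hS, hScard⟩ := exists_subset_card_eq (mem_filter.1 hf).2
        refine mem_biUnion.2 ⟨S, mem_powersetCard.2 ⟨subset_univ S, hScard⟩, ?_⟩
        simp only [Fintype.mem_piFinset, mem_filter, mem_univ, true_and]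
        exact fun i hi => (mem_filter.1 (hS hi)).2 i rfl
    _ ≤ _ := card_biUnion_le
    _ = _ := by simp only [Fintype.card_piFinset, prod_const, card_univ]

variable {block : α → β} {c : ℕ}

theorem card_eq_card_mul_of_card_fiber_eq (hc : ∀ b, #{a | block a = b} = c) :
    Fintype.card α = Fintype.card β * c := by
  rw [← card_univ, card_eq_sum_card_fiberwise (f := block) (t := univ) fun _ _ => mem_univ _,
    sum_const_nat fun b _ => hc b, card_univ]

theorem card_le_card_of_card_fiber_eq [Nonempty α] (hc : ∀ b, #{a | block a = b} = c) :
    Fintype.card β ≤ Fintype.card α := by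
  have hα := card_eq_card_mul_of_card_fiber_eq hc
  have hc0 : c ≠ 0 := by
    rintro rfl
    exact Fintype.card_ne_zero (hα.trans (mul_zero _))
  exact hα ▸ Nat.le_mul_of_pos_right _ (Nat.pos_of_ne_zero hc0)

theorem card_filter_notMem_eq_of_card_fiber_eq (hc : ∀ b, #{a | block a = b} = c) (S : Finset β) :
    #{a | block a ∉ S} = (Fintype.card β - #S) * c := by
  have hin : #{a | block a ∈ S} = #S * c := by
    rw [← sum_card_fiberwise_eq_card_filter, sum_const_nat fun b _ => hc b]
  have hsplit := card_filter_add_card_filter_not (s := univ) (fun a => block a ∈ S)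
  rw [Nat.sub_mul, ← card_eq_card_mul_of_card_fiber_eq hc, ← card_univ, ← hin]
  omega

theorem card_tuplesMissingAtLeast_le_choose_mul (hc : ∀ b, #{a | block a = b} = c)
    (s : ℕ) :
    #(tuplesMissingAtLeast (ι := ι) block s) ≤
      (Fintype.card β).choose s * ((Fintype.card β - s) * c) ^ Fintype.card ι := by
  refine (card_tuplesMissingAtLeast_le_sum block s).trans_eq ?_
  rw [sum_congr rfl fun S hS => by rw [card_filter_notMem_eq_of_card_fiber_eq hc, (mem_powersetCard.1 hS).2],
    sum_const, card_powersetCard, card_univ, smul_eq_mul]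

theorem card_tuplesMissingAtLeast_div_le [Nonempty α]
    (hc : ∀ b, #{a | block a = b} = c) (s : ℕ) :
    (#(tuplesMissingAtLeast (ι := ι) block s) : ℝ) / (Fintype.card α : ℝ) ^ Fintype.card ι ≤
      (Fintype.card β).choose s * (1 - s / Fintype.card β) ^ Fintype.card ι := by
  have hα := card_eq_card_mul_of_card_fiber_eq hc
  have hpos : 0 < Fintype.card β * c := hα ▸ Fintype.card_pos
  rw [div_le_iff₀ (by positivity), hα]
  calc _ ≤ (((Fintype.card β).choose s * ((Fintype.card β - s) * c) ^ Fintype.card ι : ℕ) : ℝ) :=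
        by exact_mod_cast card_tuplesMissingAtLeast_le_choose_mul hc s
    _ = _ := by
      rcases le_or_gt s (Fintype.card β) with hsm | hsm
      · have hm : (Fintype.card β : ℝ) ≠ 0 := by exact_mod_cast (Nat.pos_of_mul_pos_right hpos).ne'
        push_cast [hsm]
        rw [mul_assoc, ← mul_pow]
        congr 2
        field_simp
      · simp [Nat.choose_eq_zero_of_lt hsm]

end MissedBlocks

theorem choose_mul_one_sub_div_pow_le_pow_mul_exp (m s k : ℕ) :
    (m.choose s : ℝ) * (1 - s / m) ^ k ≤ m ^ s * exp (-(s * k / m)) := by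
  rcases le_or_gt s m with hsm | hsm
  · have h0 : 0 ≤ 1 - (s : ℝ) / m :=
      sub_nonneg.2 (div_le_one_of_le₀ (by exact_mod_cast hsm) m.cast_nonneg)
    have hpow : (1 - (s : ℝ) / m) ^ k ≤ exp (-(s * k / m)) := calc
      _ ≤ exp (-(s / m)) ^ k := pow_le_pow_left₀ h0 (one_sub_le_exp_neg _) k
      _ = _ := by rw [← exp_nat_mul]; ring_nf
    gcongr
    exact_mod_cast Nat.choose_le_pow m s
  · rw [Nat.choose_eq_zero_of_lt hsm]
    simp only [Nat.cast_zero, zero_mul]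
    positivity

theorem pow_mul_exp_neg_le_two_rpow {x m k : ℝ} (hx : 1 ≤ x) (hm : 0 < m) (hmx : m ≤ x ^ 2)
    (hk : k = 4 * logb 2 x * m) (s : ℕ) :
    m ^ s * exp (-(s * k / m)) ≤ 2 ^ (-(2 * logb 2 x * s)) := by
  have hL : 0 ≤ logb 2 x * s := mul_nonneg (logb_nonneg one_lt_two hx) s.cast_nonneg
  have hlog : log x = logb 2 x * log 2 := by
    rw [← log_div_log, div_mul_cancel₀ _ (log_pos one_lt_two).ne']
  have hlog2 : log 2 < 1 := by linarith [log_two_lt_d9]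
  calc m ^ s * exp (-(s * k / m)) ≤ (x ^ 2) ^ s * exp (-(4 * logb 2 x * s)) := by
        rw [hk, show (s * (4 * logb 2 x * m) / m : ℝ) = 4 * logb 2 x * s by field_simp]
        gcongr
    _ ≤ 2 ^ (-(2 * logb 2 x * s)) := by
        rw [← exp_log (pow_pos (pow_pos (by linarith) 2) s), ← exp_add, rpow_def_of_pos two_pos,
          log_pow, log_pow, hlog, exp_le_exp]
        push_cast
        nlinarith

open Classical Real Finset in
/-- A uniformly random `k`-tuple of points in the `n × n` grid leaves at least
`√(kq)` blocks empty (in a fixed partition of the grid into `n²/A` equal-area blocks,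
`A = 4n² log n / k`) with probability at most `2^{-q log^{501} n}`. -/
theorem stmt0 :
    ∃ N : ℕ, ∀ n ≥ N, ∀ k q m : ℕ, 0 < k → 0 < q → 0 < m →
      Real.sqrt n ≤ (k : ℝ) →
      (k : ℝ) = (q : ℝ) * (Real.logb 2 n) ^ 1000 →
      (m : ℝ) = (n : ℝ) ^ 2 / (4 * (n : ℝ) ^ 2 * Real.logb 2 n / (k : ℝ)) →
      ∀ block : Fin n × Fin n → Fin m,
        (∀ b : Fin m,
          ((Finset.univ.filter (fun p : Fin n × Fin n => block p = b)).card : ℝ)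
            = (n : ℝ) ^ 2 / (m : ℝ)) →
        (((Finset.univ.filter (fun f : Fin k → Fin n × Fin n =>
            Real.sqrt ((k : ℝ) * q) ≤
              ((Finset.univ.filter (fun b : Fin m =>
                ∀ i : Fin k, block (f i) ≠ b)).card : ℝ))).card : ℝ)
          / ((n : ℝ) ^ 2) ^ k)
          ≤ 2 ^ (-(q : ℝ) * (Real.logb 2 n) ^ 501) := by
  refine ⟨0, fun n _ k q m hk _ hm _ hkq hmval block hblock => ?_⟩
  set L := logb 2 n
  have hL : L ≠ 0 := by
    rintro hL
    simp [hL, hk.ne'] at hkq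
  have hn0 : n ≠ 0 := by
    rintro rfl
    simp [L] at hL
  have : NeZero n := ⟨hn0⟩
  have hn : (1 : ℝ) ≤ n := by exact_mod_cast Nat.one_le_iff_ne_zero.2 hn0
  have hc (b : Fin m) : #{p | block p = b} = #{p | block p = ⟨0, hm⟩} := by
    exact_mod_cast (hblock b).trans (hblock _).symm
  have hmn : (m : ℝ) ≤ n ^ 2 := by
    simpa [sq] using (Nat.cast_le (α := ℝ)).2 (card_le_card_of_card_fiber_eq hc)
  have hkm : (k : ℝ) = 4 * L * m := by
    rw [hmval]
    field_simp
  set s := ⌈√(k * q)⌉₊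
  have hs : (q : ℝ) * L ^ 500 ≤ s := by
    have hsqrt : √(k * q) = q * L ^ 500 := by
      rw [hkq, show (q * L ^ 1000 * q : ℝ) = (q * L ^ 500) ^ 2 by ring, sqrt_sq (by positivity)]
    exact hsqrt ▸ Nat.le_ceil _
  have hevent : ({f : Fin k → Fin n × Fin n | √(k * q) ≤ #{b | ∀ i, block (f i) ≠ b}} : Finset _)
      = tuplesMissingAtLeast block s :=
    filter_congr fun f _ => by
      rw [missedBlocks, Nat.ceil_le]
      -- the statement decides `∀ i : Fin k` by `Nat.decidableForallFin`, not the `Fintype` instance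
      congr!
  calc _ ≤ (m.choose s : ℝ) * (1 - s / m) ^ k := by
        rw [hevent, sq]
        simpa using card_tuplesMissingAtLeast_div_le (ι := Fin k) hc s
    _ ≤ m ^ s * exp (-(s * k / m)) := choose_mul_one_sub_div_pow_le_pow_mul_exp m s k
    _ ≤ 2 ^ (-(2 * L * s)) := pow_mul_exp_neg_le_two_rpow hn (by positivity) hmn hkm s
    _ ≤ 2 ^ (-(q : ℝ) * L ^ 501) := by
        have hL0 : 0 ≤ L := logb_nonneg one_lt_two hn
        gcongr
        · norm_num
        · nlinarith [mul_le_mul_of_nonneg_left hs hL0, mul_nonneg hL0 s.cast_nonneg]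
end

section
/- Let Q̃ be an isolated tuple of points in [n]×[n]. Then the data consisting of (i) the r-coordinates of all points, (ii) for each i ∈ {0,…,B} the set of blocks of G_i containing some point of Q̃, and (iii) the column-offset of each point within its block of G_B, uniquely determines the locations of all points in Q̃. In particular, for each point, among the α blocks of G_{i+1} refining its known block of G_i and consistent with its r-coordinate, exactly one belongs to the hitting set, since an isolated tuple has at most one point in any rectangle of area Aα. -/
lemma aux_div (a b c : ℕ) (hc : 0 < c) (h : a / c = b / c) : a < b + c := by
  by_contra hle
  push_neg at hle
  have h2 : (b + c) / c ≤ a / c := Nat.div_le_div_right hle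
  rw [Nat.add_div_right b hc, h] at h2
  omega

lemma aux_abs (a b c : ℕ) (hc : 0 < c) (h : a / c = b / c) :
    ((a : ℤ) - b).natAbs < c := by
  have h1 := aux_div a b c hc h
  have h2 := aux_div b a c hc h.symm
  omega


/-- An isolated tuple `Q` of points in `[n] × [n]` (every pair of points has
coordinate-difference product at least `Aα`) is uniquely determined by:
(i) the `r`-coordinates of all points, (ii) for each `i ∈ {0,…,B}` the set of
blocks of the partition `G_i` (blocks of dimensions `(Aα^i/n) × (n/α^i)`)
containing some point of the tuple, and (iii) the column-offset of each point
within its block of `G_B` (whose blocks have dimensions `n × (A/n)`). -/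
theorem stmt3 (n A α B m : ℕ) (hn : 0 < n) (hA : 0 < A) (hα : 0 < α)
    (hB : α ^ B * A = n ^ 2) (hnA : n ∣ A)
    (Q Q' : Fin m → Fin n × Fin n)
    (hQ : ∀ j j' : Fin m, j ≠ j' →
      A * α ≤ ((((Q j).1 : ℕ) : ℤ) - (((Q j').1 : ℕ) : ℤ)).natAbs *
              ((((Q j).2 : ℕ) : ℤ) - (((Q j').2 : ℕ) : ℤ)).natAbs)
    (hQ' : ∀ j j' : Fin m, j ≠ j' →
      A * α ≤ ((((Q' j).1 : ℕ) : ℤ) - (((Q' j').1 : ℕ) : ℤ)).natAbs *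
              ((((Q' j).2 : ℕ) : ℤ) - (((Q' j').2 : ℕ) : ℤ)).natAbs)
    -- (i) same r-coordinates
    (hr : ∀ j, (Q j).1 = (Q' j).1)
    -- (ii) same set of occupied blocks in every partition G_i, 0 ≤ i ≤ B
    (hblocks : ∀ i ≤ B,
      (Finset.univ.image (fun j : Fin m =>
          (((Q j).1 : ℕ) * n / (A * α ^ i), ((Q j).2 : ℕ) * α ^ i / n)))
        = (Finset.univ.image (fun j : Fin m =>
          (((Q' j).1 : ℕ) * n / (A * α ^ i), ((Q' j).2 : ℕ) * α ^ i / n))))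
    -- (iii) same column-offset within the block of G_B
    (hoff : ∀ j, ((Q j).2 : ℕ) % (A / n) = ((Q' j).2 : ℕ) % (A / n)) :
    Q = Q' := by
  obtain ⟨k, hk⟩ := hnA
  have hk0 : 0 < k := by
    rcases Nat.eq_zero_or_pos k with h | h
    · subst h; simp at hk; omega
    · exact h
  have key : ∀ i, i ≤ B → ∀ j,
      ((((Q j).1 : ℕ) * n / (A * α ^ i), ((Q j).2 : ℕ) * α ^ i / n) :
        ℕ × ℕ)
      = (((Q' j).1 : ℕ) * n / (A * α ^ i), ((Q' j).2 : ℕ) * α ^ i / n) := by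
    intro i
    induction i with
    | zero =>
      intro _ j
      simp [hr j, Nat.div_eq_of_lt (Q j).2.isLt, Nat.div_eq_of_lt (Q' j).2.isLt]
    | succ i ih =>
      intro hiB j
      have hiB' : i ≤ B := Nat.le_of_succ_le hiB
      have hmem : ((((Q j).1 : ℕ) * n / (A * α ^ (i+1)),
          ((Q j).2 : ℕ) * α ^ (i+1) / n) : ℕ × ℕ)
          ∈ (Finset.univ.image (fun j : Fin m =>
            (((Q' j).1 : ℕ) * n / (A * α ^ (i+1)), ((Q' j).2 : ℕ) * α ^ (i+1) / n))) := by
        rw [← hblocks (i+1) hiB]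
        exact Finset.mem_image_of_mem _ (Finset.mem_univ j)
      obtain ⟨j', -, hj'⟩ := Finset.mem_image.mp hmem
      by_cases hjj : j' = j
      · subst hjj; exact hj'.symm
      · exfalso
        have hrow : (((Q' j').1 : ℕ) * n / (A * α ^ (i+1)) : ℕ)
            = ((Q' j).1 : ℕ) * n / (A * α ^ (i+1)) := by
          have := congrArg Prod.fst hj'
          simpa [hr j] using this
        have hcol1 : (((Q' j').2 : ℕ) * α ^ (i+1) / n : ℕ)
            = ((Q j).2 : ℕ) * α ^ (i+1) / n := congrArg Prod.snd hj'
        -- relate level i+1 column to level i column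
        have colrel : ∀ a : ℕ, a * α ^ (i+1) / n / α = a * α ^ i / n := by
          intro a
          rw [Nat.div_div_eq_div_mul, pow_succ, ← mul_assoc,
            Nat.mul_div_mul_right _ _ hα]
        have hcolIH : (((Q j).2 : ℕ) * α ^ i / n : ℕ)
            = ((Q' j).2 : ℕ) * α ^ i / n := congrArg Prod.snd (ih hiB' j)
        have hcol : (((Q' j').2 : ℕ) * α ^ i / n : ℕ)
            = ((Q' j).2 : ℕ) * α ^ i / n := by
          rw [← colrel, hcol1, colrel, hcolIH]
        -- quantitative bounds
        have hAa : 0 < A * α ^ (i+1) := by positivity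
        have hbr := aux_abs (((Q' j).1 : ℕ) * n) (((Q' j').1 : ℕ) * n)
          (A * α ^ (i+1)) hAa hrow.symm
        have hbc := aux_abs (((Q' j).2 : ℕ) * α ^ i) (((Q' j').2 : ℕ) * α ^ i)
          n hn hcol.symm
        set D1 := ((((Q' j).1 : ℕ) : ℤ) - (((Q' j').1 : ℕ) : ℤ)).natAbs with hD1
        set D2 := ((((Q' j).2 : ℕ) : ℤ) - (((Q' j').2 : ℕ) : ℤ)).natAbs with hD2
        have e1 : (((((Q' j).1 : ℕ) * n : ℕ) : ℤ) - ((((Q' j').1 : ℕ) * n : ℕ) : ℤ)).natAbs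
            = D1 * n := by
          rw [hD1]
          push_cast
          rw [← sub_mul, Int.natAbs_mul]
          simp
        have e2 : (((((Q' j).2 : ℕ) * α ^ i : ℕ) : ℤ) - ((((Q' j').2 : ℕ) * α ^ i : ℕ) : ℤ)).natAbs
            = D2 * α ^ i := by
          rw [hD2]
          push_cast
          rw [← sub_mul, Int.natAbs_mul]
          simp [Int.natAbs_pow]
        rw [e1] at hbr
        rw [e2] at hbc
        have hiso := hQ' j j' (fun h => hjj h.symm)
        rw [← hD1, ← hD2] at hiso
        have hprod : D1 * n * (D2 * α ^ i) < A * α ^ (i+1) * n :=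
          mul_lt_mul'' hbr hbc (Nat.zero_le _) (Nat.zero_le _)
        have hprod2 : D1 * D2 * (n * α ^ i) < A * α * (n * α ^ i) := by
          calc D1 * D2 * (n * α ^ i) = D1 * n * (D2 * α ^ i) := by ring
            _ < A * α ^ (i+1) * n := hprod
            _ = A * α * (n * α ^ i) := by ring
        have : D1 * D2 < A * α :=
          Nat.lt_of_mul_lt_mul_right hprod2
        omega
  funext j
  have hcolB : (((Q j).2 : ℕ) * α ^ B / n : ℕ)
      = ((Q' j).2 : ℕ) * α ^ B / n := congrArg Prod.snd (key B le_rfl j)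
  have hαB : 0 < α ^ B := by positivity
  have hαBk : α ^ B * k = n := by
    have h1 : n * (α ^ B * k) = n * n := by
      rw [hk] at hB
      nlinarith [hB]
    exact Nat.eq_of_mul_eq_mul_left hn h1
  have hsimp : ∀ a : ℕ, a * α ^ B / n = a / k := by
    intro a
    rw [← hαBk, mul_comm a (α ^ B), Nat.mul_div_mul_left _ _ hαB]
  rw [hsimp, hsimp] at hcolB
  have hAn : A / n = k := by rw [hk, Nat.mul_div_cancel_left _ hn]
  have hmod := hoff j
  rw [hAn] at hmod
  have e1 := Nat.div_add_mod ((Q j).2 : ℕ) k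
  have e2 := Nat.div_add_mod ((Q' j).2 : ℕ) k
  rw [hcolB, hmod] at e1
  have hv2 : ((Q j).2 : ℕ) = ((Q' j).2 : ℕ) := e1.symm.trans e2
  exact Prod.ext (hr j) (Fin.ext hv2)
end

section
/- If |T| ≤ C(n²/A, q/2)^{0.95B}, then every y ∈ Y can be encoded with at most 1.99·q·log n bits, and hence |Y| ≤ 2^{1.99 q log n}, so μ_y(Y) ≤ 2^{−0.01·q·log n} where μ_y is uniform over all n^{2q} q-tuples of grid points. -/
/-!
A tuple `y ∈ Y` is determined by its rows, its hitting pattern, its isolated set `sel y` and its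
columns, where on `sel y` only the residues modulo `d = A / n` are recorded. Going up the levels
`i = 0, …, B`, the hitting pattern pins down the level-`i` column block of every isolated point:
two isolated points sharing a level-`i` row block and column block would span a rectangle of area
less than `Aα`. At level `B` the column blocks have width `d`. Counting codes gives
`|Y| ≤ n^q |T| C(q, q/2) d^(q/2) n^(q/2)`, and in the given range of parameters
`log |T| ≤ (q/2) (log (n²/A) - 2 - 0.02 log n)`, which turns this into `|Y| ≤ 2^(1.99 q log n)`.
-/

open Real Finset

theorem natAbs_sub_mul_lt_of_mul_div_eq {a b k m : ℕ} (hm : 0 < m) (h : a * k / m = b * k / m) :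
    ((a : ℤ) - b).natAbs * k < m := by
  have ha := Nat.div_add_mod (a * k) m
  have hb := Nat.div_add_mod (b * k) m
  have ha' := Nat.mod_lt (a * k) hm
  have hb' := Nat.mod_lt (b * k) hm
  rw [h] at ha
  have e : ((a : ℤ) - b).natAbs * k = ((a * k : ℕ) - (b * k : ℕ) : ℤ).natAbs := by
    push_cast; rw [← sub_mul, Int.natAbs_mul, Int.natAbs_natCast]
  rw [e]
  omega

theorem mul_lt_of_mul_lt_of_mul_lt {a b c n t : ℕ} (h₁ : a * n < c * t) (h₂ : b * t < n) :
    a * b < c := by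
  refine Nat.lt_of_mul_lt_mul_right (a := n * t) ?_
  calc a * b * (n * t) = a * n * (b * t) := by ring
    _ < c * t * n := Nat.mul_lt_mul'' h₁ h₂
    _ = c * (n * t) := by ring

theorem mul_pow_succ_div_div {α : ℕ} (hα : 0 < α) (z n i : ℕ) :
    z * α ^ (i + 1) / n / α = z * α ^ i / n := by
  rw [Nat.div_div_eq_div_mul, pow_succ, ← mul_assoc, Nat.mul_div_mul_right _ _ hα]

section Encoding

variable {ι : Type*} {n A α B d : ℕ}

theorem mul_pow_div_eq_of_hits {S : Finset ι} {r c c' : ι → ℕ} (hA : 0 < A) (hα : 0 < α)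
    (hc : ∀ j, c j < n) (hc' : ∀ j, c' j < n)
    (hsep : ∀ j ∈ S, ∀ j' ∈ S, j ≠ j' →
      A * α ≤ ((r j : ℤ) - r j').natAbs * ((c j : ℤ) - c j').natAbs)
    (hhit : ∀ i ≤ B, ∀ j ∈ S, ∃ j' ∈ S, r j' * n / (A * α ^ i) = r j * n / (A * α ^ i) ∧
      c j' * α ^ i / n = c' j * α ^ i / n) :
    ∀ i ≤ B, ∀ j ∈ S, c' j * α ^ i / n = c j * α ^ i / n := by
  intro i
  induction i with
  | zero =>
    intro _ j _
    simp [Nat.div_eq_of_lt (hc j), Nat.div_eq_of_lt (hc' j)]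
  | succ i ih =>
    intro hi j hj
    obtain ⟨j', hj', hrow, hcol⟩ := hhit (i + 1) hi j hj
    -- Otherwise `j` and `j'` would share a row block of height `Aα^(i+1)/n` and, by induction,
    -- a column block of width `n/α^i`, spanning a rectangle of area less than `Aα`.
    obtain rfl : j' = j := by
      by_contra hne
      have hcol_i : c j' * α ^ i / n = c j * α ^ i / n := by
        rw [← mul_pow_succ_div_div hα, hcol, mul_pow_succ_div_div hα, ih (by omega) j hj]
      have hr := natAbs_sub_mul_lt_of_mul_div_eq (by positivity) hrow
      have hc := natAbs_sub_mul_lt_of_mul_div_eq (hc j).pos hcol_i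
      rw [pow_succ', ← mul_assoc] at hr
      exact (hsep j' hj' j hj hne).not_gt (mul_lt_of_mul_lt_of_mul_lt hr hc)
    exact hcol.symm

def boxArea (p p' : Fin n × Fin n) : ℕ :=
  (((p.1 : ℕ) : ℤ) - ((p'.1 : ℕ) : ℤ)).natAbs * (((p.2 : ℕ) : ℤ) - ((p'.2 : ℕ) : ℤ)).natAbs

/-- The paper's `H(y)`: for each level `i ≤ B`, the level-`i` cells (row blocks of height
`Aα^i/n`, column blocks of width `n/α^i`) containing the points of `y` indexed by `S`. -/
def hittingPattern (n A α B : ℕ) (S : Finset ι) (y : ι → Fin n × Fin n) :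
    Finset (ℕ × ℕ × ℕ) :=
  (range (B + 1)).biUnion fun i =>
    S.image fun j => (i, ((y j).1 : ℕ) * n / (A * α ^ i), ((y j).2 : ℕ) * α ^ i / n)

theorem eq_of_hittingPattern_eq [DecidableEq ι] {S : Finset ι} {y y' : ι → Fin n × Fin n}
    (hA : 0 < A) (hα : 0 < α) (hd : d * α ^ B = n)
    (hsep : ∀ j ∈ S, ∀ j' ∈ S, j ≠ j' → A * α ≤ boxArea (y j) (y j'))
    (hrow : ∀ j, (y j).1 = (y' j).1)
    (hH : hittingPattern n A α B S y = hittingPattern n A α B S y')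
    (hcol : ∀ j, (if j ∈ S then ((y j).2 : ℕ) % d else (y j).2) =
      (if j ∈ S then ((y' j).2 : ℕ) % d else (y' j).2)) :
    y = y' := by
  have hdiv := mul_pow_div_eq_of_hits (B := B) (r := fun j => (y j).1) (c := fun j => (y j).2)
    (c' := fun j => (y' j).2) hA hα (fun j => (y j).2.isLt) (fun j => (y' j).2.isLt) hsep
    (by
      intro i hi j hj
      have hmem : (i, ((y' j).1 : ℕ) * n / (A * α ^ i), ((y' j).2 : ℕ) * α ^ i / n) ∈
          hittingPattern n A α B S y :=
        hH ▸ mem_biUnion.2 ⟨i, mem_range.2 (by omega), mem_image_of_mem _ hj⟩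
      obtain ⟨i', -, hmem⟩ := mem_biUnion.1 hmem
      obtain ⟨j', hj', he⟩ := mem_image.1 hmem
      simp only [Prod.mk.injEq] at he
      obtain ⟨rfl, hr, hc⟩ := he
      exact ⟨j', hj', by rw [hr, hrow], hc⟩)
  funext j
  refine Prod.ext (hrow j) (Fin.ext ?_)
  have hcj := hcol j
  by_cases hj : j ∈ S
  · simp only [hj, if_true] at hcj
    have hq := hdiv B le_rfl j hj
    simp only [← hd, Nat.mul_div_mul_right _ _ (pow_pos hα B)] at hq
    rw [← Nat.div_add_mod ((y j).2 : ℕ) d, ← Nat.div_add_mod ((y' j).2 : ℕ) d, hq, hcj]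
  · simpa [hj] using hcj

theorem prod_card_ite_range [Fintype ι] [DecidableEq ι] (S : Finset ι) (d n : ℕ) :
    ∏ j, #(if j ∈ S then range d else range n) = d ^ #S * n ^ (Fintype.card ι - #S) := by
  simp only [apply_ite, card_range, prod_ite, prod_const, filter_mem_eq_inter, univ_inter,
    filter_not, card_sdiff_of_subset (subset_univ S), card_univ]

theorem card_le_of_hittingPattern_mem [Fintype ι] [DecidableEq ι]
    {Y : Finset (ι → Fin n × Fin n)} {sel : (ι → Fin n × Fin n) → Finset ι}
    {T : Finset (Finset (ℕ × ℕ × ℕ))} {s : ℕ}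
    (hA : 0 < A) (hα : 0 < α) (hd : d * α ^ B = n)
    (hsel : ∀ y ∈ Y, #(sel y) = s ∧
      ∀ j ∈ sel y, ∀ j' ∈ sel y, j ≠ j' → A * α ≤ boxArea (y j) (y j'))
    (hT : ∀ y ∈ Y, hittingPattern n A α B (sel y) y ∈ T) :
    #Y ≤ n ^ Fintype.card ι *
      (#T * ((Fintype.card ι).choose s * (d ^ s * n ^ (Fintype.card ι - s)))) := by
  let encode (y : ι → Fin n × Fin n) :
      (ι → ℕ) × Finset (ℕ × ℕ × ℕ) × (Σ _ : Finset ι, ι → ℕ) :=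
    (fun j => (y j).1, hittingPattern n A α B (sel y) y,
      ⟨sel y, fun j => if j ∈ sel y then ((y j).2 : ℕ) % d else (y j).2⟩)
  let codes := Fintype.piFinset (fun _ : ι => range n) ×ˢ T ×ˢ
    (powersetCard s univ).sigma fun S : Finset ι =>
      Fintype.piFinset fun j : ι => if j ∈ S then range d else range n
  calc #Y ≤ #codes := by
        refine card_le_card_of_injOn encode (fun y hy => ?_) (fun y hy y' hy' he => ?_)
        · rw [mem_coe] at hy
          simp only [mem_coe, encode, codes, mem_product, mem_sigma, Fintype.mem_piFinset,
            mem_range, mem_powersetCard_univ, hT y hy, (hsel y hy).1, true_and]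
          refine ⟨fun j => (y j).1.isLt, fun j => ?_⟩
          split_ifs
          · exact mem_range.2 (Nat.mod_lt _ (Nat.pos_of_mul_pos_right (hd ▸ (y j).2.pos)))
          · exact mem_range.2 (y j).2.isLt
        · simp only [encode, Prod.mk.injEq, Sigma.mk.injEq, heq_iff_eq] at he
          obtain ⟨hrow, hH, hS, hcol⟩ := he
          rw [← hS] at hH hcol
          exact eq_of_hittingPattern_eq hA hα hd (hsel y hy).2
            (fun j => Fin.ext (congrFun hrow j)) hH (congrFun hcol)
    _ = _ := by
        simp only [codes, card_product, Fintype.card_piFinset, card_range, prod_const, card_univ,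
          card_sigma, prod_card_ite_range]
        rw [sum_congr rfl fun S hS => by rw [(mem_powersetCard_univ.1 hS)], sum_const,
          card_powersetCard, card_univ, smul_eq_mul]

end Encoding

theorem choose_le_exp_one_mul_div_pow (m s : ℕ) :
    (m.choose s : ℝ) ≤ (exp 1 * m / s) ^ s := by
  rcases Nat.eq_zero_or_pos s with rfl | hs
  · simp
  have hs' : (0 : ℝ) < s := by exact_mod_cast hs
  calc (m.choose s : ℝ) ≤ (m : ℝ) ^ s / s.factorial := Nat.choose_le_pow_div s m
    _ = (m / s : ℝ) ^ s * ((s : ℝ) ^ s / s.factorial) := by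
        rw [div_pow, mul_div_assoc', div_mul_cancel₀ _ (by positivity)]
    _ ≤ (m / s : ℝ) ^ s * exp s := by
        gcongr; exact pow_div_factorial_le_exp (s : ℝ) hs'.le s
    _ = (exp 1 * m / s) ^ s := by
        rw [← exp_one_pow, ← mul_pow]; ring

theorem logb_exp_one_lt_two : logb 2 (exp 1) < 2 := by
  rw [logb_lt_iff_lt_rpow one_lt_two (exp_pos 1)]
  have := exp_one_lt_d9
  norm_num
  linarith

theorem logb_add_three_le {L : ℝ} (hL : 131072 ≤ L) : logb 2 L + 3 ≤ L / 100 := by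
  have hL0 : 0 < L := by linarith
  have hsqrt : 362 ≤ √L := le_sqrt_of_sq_le (by linarith)
  have hlog : log L ≤ √L / (1 / 2) := by
    simpa only [sqrt_eq_rpow] using log_le_rpow_div hL0.le one_half_pos
  have hlogb : logb 2 L ≤ 3 * √L := by
    rw [logb, div_le_iff₀ (log_pos one_lt_two)]
    nlinarith [log_two_gt_d9]
  nlinarith [sq_sqrt hL0.le]

theorem blockCount_bounds {n k q s A M L : ℝ} (hA : 0 < A) (hk : 0 < k) (hL : 4 ≤ L)
    (hq : q = 2 * s) (hs : 0 ≤ s) (hAM : A * M = n ^ 2)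
    (hqk : q * L ^ 999 ≤ k) (hkq : k ≤ q * L ^ 1001)
    (hA₁ : 2 * n ^ 2 * L / k ≤ A) (hA₂ : A ≤ 8 * n ^ 2 * L / k) :
    s ≤ M ∧ M ≤ s * L ^ 1000 ∧ k ≤ 8 * M * L := by
  rw [div_le_iff₀ hk, ← hAM] at hA₁
  rw [le_div_iff₀ hk, ← hAM] at hA₂
  have hlow : 2 * M * L ≤ k := le_of_mul_le_mul_left (by linarith) hA
  have hup : k ≤ 8 * M * L := le_of_mul_le_mul_left (by linarith) hA
  have hL0 : 0 < L := by linarith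
  have hL998 : 4 ≤ L ^ 998 := hL.trans (le_self_pow₀ (by linarith) (by norm_num))
  refine ⟨?_, ?_, hup⟩
  · have : s * L ^ 998 * (2 * L) ≤ 4 * M * (2 * L) := by
      rw [hq] at hqk; linarith [show L ^ 999 = L ^ 998 * L by ring]
    nlinarith [le_of_mul_le_mul_right this (by positivity)]
  · refine le_of_mul_le_mul_right (a := 2 * L) ?_ (by positivity)
    rw [hq] at hkq; linarith [show L ^ 1001 = L ^ 1000 * L by ring]

theorem mul_logb_le_logb_of_sqrt_le {n M : ℝ} (hn : 0 < n) (hL : 131072 ≤ logb 2 n)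
    (h : √n ≤ 8 * M * logb 2 n) : 0.49 * logb 2 n ≤ logb 2 M := by
  have hL0 : 0 < logb 2 n := by linarith
  have hsqrt : logb 2 √n = logb 2 n / 2 := by
    rw [sqrt_eq_rpow, logb_rpow_eq_mul_logb_of_pos hn]; ring
  have h8 : logb 2 8 = 3 := by
    rw [show (8 : ℝ) = 2 ^ 3 by norm_num, logb_pow, logb_self_eq_one one_lt_two]; norm_num
  have hmono : logb 2 (√n / (8 * logb 2 n)) ≤ logb 2 M :=
    logb_le_logb_of_le one_lt_two (by positivity) ((div_le_iff₀ (by positivity)).2 (by linarith))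
  rw [logb_div (by positivity) (by positivity), logb_mul (by norm_num) hL0.ne', hsqrt, h8] at hmono
  linarith [logb_add_three_le hL]

theorem mul_logb_le_logb_pow {α L : ℝ} {B : ℕ} (hL : 0 < L) (hα : L ^ 996 ≤ α) :
    996 * B * logb 2 L ≤ logb 2 (α ^ B) := by
  rw [logb_pow]
  have := logb_le_logb_of_le one_lt_two (by positivity) hα
  rw [logb_pow, Nat.cast_ofNat] at this
  rw [mul_assoc, mul_left_comm]
  exact mul_le_mul_of_nonneg_left this B.cast_nonneg

theorem logb_choose_le {m s : ℕ} {L : ℝ} (hs : 0 < s) (hsm : s ≤ m)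
    (hmL : (m : ℝ) ≤ s * L ^ 1000) :
    logb 2 (m.choose s) ≤ s * (2 + 1000 * logb 2 L) := by
  have hs' : (0 : ℝ) < s := by exact_mod_cast hs
  have hm : (0 : ℝ) < m := by exact_mod_cast hs.trans_le hsm
  have hC : (0 : ℝ) < m.choose s := by exact_mod_cast Nat.choose_pos hsm
  have hratio : logb 2 (m / s) ≤ 1000 * logb 2 L := by
    have hpow : logb 2 (L ^ 1000) = 1000 * logb 2 L := by simpa using logb_pow 2 L 1000
    rw [← hpow]
    exact logb_le_logb_of_le one_lt_two (by positivity) ((div_le_iff₀' hs').2 hmL)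
  calc logb 2 (m.choose s) ≤ logb 2 ((exp 1 * m / s) ^ s) :=
        logb_le_logb_of_le one_lt_two hC (choose_le_exp_one_mul_div_pow m s)
    _ = s * (logb 2 (exp 1) + logb 2 (m / s)) := by
        rw [logb_pow, mul_div_assoc, logb_mul (exp_pos 1).ne' (by positivity)]
    _ ≤ s * (2 + 1000 * logb 2 L) := by
        gcongr; exact logb_exp_one_lt_two.le

theorem le_two_rpow_of_le_choose_rpow {T L : ℝ} {m s B : ℕ} (hL : 131072 ≤ L) (hs : 0 < s)
    (hsm : s ≤ m) (hmL : (m : ℝ) ≤ s * L ^ 1000) (hlogm₁ : 996 * B * logb 2 L ≤ logb 2 m)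
    (hlogm₂ : 0.49 * L ≤ logb 2 m) (hT : T ≤ (m.choose s : ℝ) ^ ((0.95 : ℝ) * B)) :
    T ≤ 2 ^ (s * (logb 2 m - 2 - 0.02 * L)) := by
  have hC : (0 : ℝ) < m.choose s := by exact_mod_cast Nat.choose_pos hsm
  have hl : 17 ≤ logb 2 L := by
    have := logb_le_logb_of_le one_lt_two (by norm_num) hL
    rwa [show (131072 : ℝ) = 2 ^ (17 : ℝ) by norm_num, logb_rpow two_pos (by norm_num)] at this
  have hB : (0 : ℝ) ≤ B := B.cast_nonneg
  have hs' : (0 : ℝ) ≤ s := s.cast_nonneg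
  -- `0.95 · 1000 < 0.954 · 996`, and `0.046 · logb 2 m ≥ 0.0225 L` absorbs `2 + 0.02 L`.
  have hexp : 0.95 * B * (2 + 1000 * logb 2 L) ≤ logb 2 m - 2 - 0.02 * L := by
    nlinarith [mul_nonneg hB (sub_nonneg.2 hl)]
  refine hT.trans ((logb_le_iff_le_rpow one_lt_two (by positivity)).1 ?_)
  rw [logb_rpow_eq_mul_logb_of_pos hC]
  calc 0.95 * B * logb 2 (m.choose s) ≤ 0.95 * B * (s * (2 + 1000 * logb 2 L)) := by
        gcongr; exact logb_choose_le hs hsm hmL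
    _ ≤ s * (logb 2 m - 2 - 0.02 * L) := by nlinarith [mul_le_mul_of_nonneg_left hexp hs']

theorem le_two_rpow_of_le_encoding {Y T C n d M : ℝ} {s : ℕ} (hn : 0 < n) (hM : 0 < M)
    (hd : d * M = n) (hC₀ : 0 ≤ C)
    (hT : T ≤ 2 ^ (s * (logb 2 M - 2 - 0.02 * logb 2 n))) (hC : C ≤ 2 ^ (2 * s))
    (hY : Y ≤ n ^ (2 * s) * (T * (C * (d ^ s * n ^ s)))) :
    Y ≤ 2 ^ (1.99 * (2 * s : ℕ) * logb 2 n) := by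
  have hd₀ : 0 < d := pos_of_mul_pos_left (hd ▸ hn) hM.le
  have hpow : ∀ {z : ℝ}, 0 < z → ∀ k : ℕ, z ^ k = (2 : ℝ) ^ (logb 2 z * k) := fun hz k => by
    rw [rpow_mul_natCast zero_le_two, rpow_logb two_pos (by norm_num) hz]
  have hlogd : logb 2 d = logb 2 n - logb 2 M := by
    rw [← hd, logb_mul hd₀.ne' hM.ne']; ring
  calc Y ≤ n ^ (2 * s) * (T * (C * (d ^ s * n ^ s))) := hY
    _ ≤ 2 ^ (logb 2 n * (2 * s : ℕ)) * (2 ^ (s * (logb 2 M - 2 - 0.02 * logb 2 n)) *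
          (2 ^ (2 * s : ℕ) * (2 ^ (logb 2 d * s) * 2 ^ (logb 2 n * s)))) := by
        rw [← hpow hn, ← hpow hd₀, ← hpow hn]
        gcongr
    _ = 2 ^ (1.99 * (2 * s : ℕ) * logb 2 n) := by
        rw [← rpow_natCast 2 (2 * s), ← rpow_add two_pos, ← rpow_add two_pos, ← rpow_add two_pos,
          ← rpow_add two_pos, hlogd]
        push_cast
        ring_nf

theorem div_sq_pow_le_two_rpow {Y n : ℝ} {q : ℕ} (hn : 0 < n)
    (hY : Y ≤ 2 ^ ((1.99 : ℝ) * q * logb 2 n)) :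
    Y / (n ^ 2) ^ q ≤ 2 ^ (-(0.01 : ℝ) * q * logb 2 n) := by
  have hden : (n ^ 2) ^ q = (2 : ℝ) ^ (2 * q * logb 2 n) := by
    have := rpow_mul_natCast zero_le_two (logb 2 n) (2 * q)
    rw [rpow_logb two_pos (by norm_num) hn] at this
    rw [← pow_mul, ← this]
    push_cast; ring_nf
  rw [hden, div_le_iff₀ (by positivity), ← rpow_add two_pos]
  exact hY.trans_eq (by congr 1; ring)

open Classical Real Finset in
/-- Case 1 of the rectangle bound for `2D-ORC`: if `Y` is a set of well-separated
`q`-tuples of grid points (each `y` carries an isolated subtuple `sel y` of size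
`q/2`, pairwise far at threshold `Aα`) whose set `T` of hitting patterns satisfies
`|T| ≤ C(n²/A, q/2)^{0.95B}`, then `|Y| ≤ 2^{1.99·q·log n}` and hence
`μy(Y) ≤ 2^{−0.01·q·log n}` under the uniform distribution over `q`-tuples. -/
theorem stmt9 :
    ∃ N : ℕ, ∀ n ≥ N, ∀ k q A α B : ℕ,
      0 < A → 0 < α → 2 ∣ q → 1 ≤ q →
      Real.sqrt n ≤ (k : ℝ) →
      (q : ℝ) * (Real.logb 2 n) ^ 999 ≤ (k : ℝ) →
      (k : ℝ) ≤ (q : ℝ) * (Real.logb 2 n) ^ 1001 →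
      2 * (n : ℝ) ^ 2 * Real.logb 2 n / (k : ℝ) ≤ (A : ℝ) →
      (A : ℝ) ≤ 8 * (n : ℝ) ^ 2 * Real.logb 2 n / (k : ℝ) →
      (Real.logb 2 n) ^ 996 ≤ (α : ℝ) → (α : ℝ) ≤ (Real.logb 2 n) ^ 998 →
      α ^ B * A = n ^ 2 → n ∣ A →
      ∀ (Y : Finset (Fin q → Fin n × Fin n))
        (sel : (Fin q → Fin n × Fin n) → Finset (Fin q)),
      (∀ y ∈ Y, (sel y).card = q / 2 ∧
        ∀ i ∈ sel y, ∀ j ∈ sel y, i ≠ j →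
          A * α ≤ ((((y i).1 : ℕ) : ℤ) - (((y j).1 : ℕ) : ℤ)).natAbs *
                  ((((y i).2 : ℕ) : ℤ) - (((y j).2 : ℕ) : ℤ)).natAbs) →
      ∀ T : Finset (Finset (ℕ × ℕ × ℕ)),
      (∀ y ∈ Y,
        (Finset.range (B + 1)).biUnion (fun i => (sel y).image
          (fun j => (i, ((y j).1 : ℕ) * n / (A * α ^ i), ((y j).2 : ℕ) * α ^ i / n)))
          ∈ T) →
      (T.card : ℝ) ≤ ((Nat.choose (n ^ 2 / A) (q / 2) : ℝ)) ^ ((0.95 : ℝ) * B) →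
      (Y.card : ℝ) ≤ 2 ^ ((1.99 : ℝ) * q * Real.logb 2 n) ∧
      (Y.card : ℝ) / ((n : ℝ) ^ 2) ^ q ≤ 2 ^ (-(0.01 : ℝ) * q * Real.logb 2 n) := by
  refine ⟨2 ^ 131072, fun n hn k q A α B hA hα ⟨s, hq⟩ hq1 hsqrt hqk hkq hA₁ hA₂ hα₁ _ hABn
    ⟨d, hAd⟩ Y sel hsel T hTmem hTcard => ?_⟩
  subst hq hAd
  have hs : 0 < s := by omega
  have hn0 : 0 < n := lt_of_lt_of_le (by positivity) hn
  have hd : d * α ^ B = n := Nat.eq_of_mul_eq_mul_left hn0 (by linarith [hABn])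
  have hblocks : n ^ 2 / (n * d) = α ^ B := Nat.div_eq_of_eq_mul_left hA hABn.symm
  simp only [Nat.mul_div_cancel_left s two_pos, hblocks] at hsel hTcard
  have hL : (131072 : ℝ) ≤ logb 2 n := by
    have := logb_le_logb_of_le one_lt_two (by positivity)
      (show (2 : ℝ) ^ 131072 ≤ n by exact_mod_cast hn)
    rwa [logb_pow, logb_self_eq_one one_lt_two, mul_one, Nat.cast_ofNat] at this
  have hk : (0 : ℝ) < k := (sqrt_pos.2 (by exact_mod_cast hn0)).trans_le hsqrt
  obtain ⟨hsM, hML, hkM⟩ := blockCount_bounds (M := ((α ^ B : ℕ) : ℝ)) (s := s)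
    (by exact_mod_cast hA) hk (by linarith) (by push_cast; ring) s.cast_nonneg
    (by rw [mul_comm]; exact_mod_cast hABn) hqk hkq hA₁ hA₂
  have hcount := card_le_of_hittingPattern_mem hA hα hd hsel hTmem
  rw [Fintype.card_fin, show 2 * s - s = s by omega] at hcount
  have hT := le_two_rpow_of_le_choose_rpow hL hs (by exact_mod_cast hsM) hML
    (by push_cast; exact mul_logb_le_logb_pow (by linarith) hα₁)
    (mul_logb_le_logb_of_sqrt_le (by positivity) hL (hsqrt.trans hkM)) hTcard
  have hY := le_two_rpow_of_le_encoding (Y := #Y) (C := (2 * s).choose s) (d := d)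
    (by positivity) (by positivity) (by exact_mod_cast hd) (Nat.cast_nonneg _) hT
    (by exact_mod_cast Nat.choose_le_two_pow _ _) (by exact_mod_cast hcount)
  exact ⟨hY, div_sq_pow_le_two_rpow (by positivity) hY⟩
end

section
/- Among the ~n²/(4A) dominance vectors of the blocks of one fixed row-column parity class in G_i, after removing at most √(kq) + α^i/2 + n²/(2Aα^i) of them (those in the first meta-row and those whose immediate upper-left block is empty of x's points), the remaining vectors are linearly independent over ℝ: sorting the blocks in upper-to-lower, left-to-right order, each remaining block's dominance vector has a nonzero coordinate (corresponding to a point of x in its immediate upper-left block) at which all earlier vectors vanish. -/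
/-!
Sort the surviving odd-odd blocks by the componentwise order. Every survivor `b` has a point of `x`
in its immediate upper-left block `(b.1 - 1, b.2 - 1)`, which has even-even parity; `b` dominates
that point, and a block `b'` dominates it only if `b ≤ b'`. So the dominance vectors are
triangular with respect to these pivot points, hence independent. A block is removed only when its
upper-left block is empty, and distinct odd-odd blocks have distinct upper-left blocks, so the
evenly-spreading bound `√(kq)` bounds the number of removed blocks.
-/

open Finset

theorem linearIndependent_of_pivot {ι κ R : Type*} [PartialOrder ι] [Ring R] [NoZeroDivisors R]
    {v : ι → κ → R} (p : ι → κ) (hpivot : ∀ i, v i (p i) ≠ 0)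
    (hvanish : ∀ i i', ¬ i ≤ i' → v i' (p i) = 0) : LinearIndependent R v := by
  classical
  rw [linearIndependent_iff']
  intro s g hsum
  by_contra! hne
  obtain ⟨i₀, hi₀s, hgi₀⟩ := hne
  obtain ⟨i, hi⟩ := (s.filter (g · ≠ 0)).exists_maximal ⟨i₀, mem_filter.2 ⟨hi₀s, hgi₀⟩⟩
  obtain ⟨his, hgi⟩ := mem_filter.1 hi.prop
  have hterm : ∀ i' ∈ s, i' ≠ i → g i' * v i' (p i) = 0 := by
    intro i' hi's hne
    by_cases hgi' : g i' = 0
    · rw [hgi', zero_mul]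
    · have hnle : ¬ i ≤ i' := fun hle =>
        hne (le_antisymm (hi.2 (mem_filter.2 ⟨hi's, hgi'⟩) hle) hle)
      rw [hvanish i i' hnle, mul_zero]
  have hpi : ∑ i' ∈ s, g i' * v i' (p i) = g i * v i (p i) := sum_eq_single_of_mem i his hterm
  have hzero : ∑ i' ∈ s, g i' * v i' (p i) = 0 := by
    simpa only [Finset.sum_apply, Pi.smul_apply, smul_eq_mul, Pi.zero_apply] using congrFun hsum (p i)
  exact mul_ne_zero hgi (hpivot i) (hpi ▸ hzero)

theorem linearIndependent_dominance {κ R : Type*} [Ring R] [NoZeroDivisors R] [Nontrivial R]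
    (β : κ → ℕ × ℕ) (T : Finset (ℕ × ℕ))
    (hT : ∀ b ∈ T, b.1 % 2 = 1 ∧ b.2 % 2 = 1 ∧ ∃ j, β j = (b.1 - 1, b.2 - 1)) :
    LinearIndependent R (fun b : {b : ℕ × ℕ // b ∈ T} => fun j : κ =>
      if (β j).1 % 2 = 0 ∧ (β j).2 % 2 = 0 ∧ (β j).1 < (b : ℕ × ℕ).1 ∧ (β j).2 < (b : ℕ × ℕ).2
      then (1 : R) else 0) := by
  choose hodd₁ hodd₂ p hp using hT
  refine linearIndependent_of_pivot (fun b => p b.1 b.2) (fun b => ?_) (fun b b' hnle => ?_)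
  · have h₁ := hodd₁ b.1 b.2
    have h₂ := hodd₂ b.1 b.2
    rw [if_pos (by rw [hp]; omega)]
    exact one_ne_zero
  · have hnle' : ¬ (b.1.1 ≤ b'.1.1 ∧ b.1.2 ≤ b'.1.2) := hnle
    rw [if_neg (by rw [hp]; omega)]

theorem card_filter_upperLeft_le (R C : ℕ) (E : ℕ × ℕ → Prop) [DecidablePred E] :
    #(((range R ×ˢ range C).filter (fun b => b.1 % 2 = 1 ∧ b.2 % 2 = 1)).filter
        (fun b => E (b.1 - 1, b.2 - 1))) ≤ #((range R ×ˢ range C).filter E) := by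
  refine card_le_card_of_injOn (fun b => (b.1 - 1, b.2 - 1)) (fun b hb => ?_) (fun a ha b hb hab => ?_)
  · simp only [mem_coe, mem_filter, mem_product, mem_range] at hb ⊢
    exact ⟨⟨by omega, by omega⟩, hb.2⟩
  · simp only [mem_coe, mem_filter, Prod.mk.injEq] at ha hb hab
    exact Prod.ext (by omega) (by omega)

open Classical Finset in
theorem stmt10_general (n A α i k q : ℕ)
    (β : Fin k → ℕ × ℕ)
    (R C : ℕ)
    -- x is evenly-spreading: at most √(kq) blocks of G_i contain no point of x
    (hES : (((Finset.range R ×ˢ Finset.range C).filter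
        (fun b => ∀ j, β j ≠ b)).card : ℝ) ≤ Real.sqrt ((k : ℝ) * q)) :
    ∃ Bad : Finset (ℕ × ℕ),
      Bad ⊆ (Finset.range R ×ˢ Finset.range C).filter
          (fun b => b.1 % 2 = 1 ∧ b.2 % 2 = 1)
      ∧ (Bad.card : ℝ) ≤
          Real.sqrt ((k : ℝ) * q) + (α : ℝ) ^ i / 2 + (n : ℝ) ^ 2 / (2 * A * (α : ℝ) ^ i)
      ∧ LinearIndependent ℝ
          (fun b : {b : ℕ × ℕ // b ∈ ((Finset.range R ×ˢ Finset.range C).filter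
              (fun b => b.1 % 2 = 1 ∧ b.2 % 2 = 1)) \ Bad} =>
            (fun j : Fin k =>
              if (β j).1 % 2 = 0 ∧ (β j).2 % 2 = 0 ∧
                  (β j).1 < (b : ℕ × ℕ).1 ∧ (β j).2 < (b : ℕ × ℕ).2
              then (1 : ℝ) else 0)) := by
  set S := (range R ×ˢ range C).filter (fun b => b.1 % 2 = 1 ∧ b.2 % 2 = 1)
  set Bad := S.filter (fun b => ∀ j, β j ≠ (b.1 - 1, b.2 - 1))
  refine ⟨Bad, filter_subset _ _, ?_, linearIndependent_dominance β _ fun b hb => ?_⟩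
  · have hcard : (#Bad : ℝ) ≤ #((range R ×ˢ range C).filter (fun b => ∀ j, β j ≠ b)) := by
      exact_mod_cast card_filter_upperLeft_le R C (fun b => ∀ j, β j ≠ b)
    have : (0 : ℝ) ≤ (α : ℝ) ^ i / 2 + (n : ℝ) ^ 2 / (2 * A * (α : ℝ) ^ i) := by positivity
    linarith
  · obtain ⟨hbS, hbBad⟩ := mem_sdiff.1 hb
    have hodd := (mem_filter.1 hbS).2
    simp only [Bad, mem_filter, not_and, not_forall, not_not] at hbBad
    exact ⟨hodd.1, hodd.2, hbBad hbS⟩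

open Classical Finset in
/-- Among the dominance vectors of the blocks of the odd-row/odd-column parity
class of the meta-grid `G_i` (with `R = n²/(Aα^i)` meta-rows and `C = α^i`
meta-columns), after removing at most `√(kq) + α^i/2 + n²/(2Aα^i)` of them
(those in the first meta-row, the first meta-column, and those whose immediate
upper-left block contains no point of `x`), the remaining vectors are linearly
independent over `ℝ`.  Here `β j` is the block of `G_i` containing the `j`-th
point of `x`, and the dominance vector of a class block `(u,v)` is the 0-1
vector, supported on the coordinates of points lying in opposite-parity blocks,
indicating which points are dominated. -/
theorem stmt10 (n A α i k q : ℕ) (hA : 0 < A) (hα : 0 < α)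
    (hdvd : A * α ^ i ∣ n ^ 2)
    (P : Fin k → Fin n × Fin n)
    (β : Fin k → ℕ × ℕ)
    (hβ : ∀ j, β j = (((P j).1 : ℕ) * n / (A * α ^ i), ((P j).2 : ℕ) * α ^ i / n))
    (R C : ℕ) (hR : R = n ^ 2 / (A * α ^ i)) (hC : C = α ^ i)
    (hrange : ∀ j, (β j).1 < R ∧ (β j).2 < C)
    -- x is evenly-spreading: at most √(kq) blocks of G_i contain no point of x
    (hES : (((Finset.range R ×ˢ Finset.range C).filter
        (fun b => ∀ j, β j ≠ b)).card : ℝ) ≤ Real.sqrt ((k : ℝ) * q)) :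
    ∃ Bad : Finset (ℕ × ℕ),
      Bad ⊆ (Finset.range R ×ˢ Finset.range C).filter
          (fun b => b.1 % 2 = 1 ∧ b.2 % 2 = 1)
      ∧ (Bad.card : ℝ) ≤
          Real.sqrt ((k : ℝ) * q) + (α : ℝ) ^ i / 2 + (n : ℝ) ^ 2 / (2 * A * (α : ℝ) ^ i)
      ∧ LinearIndependent ℝ
          (fun b : {b : ℕ × ℕ // b ∈ ((Finset.range R ×ˢ Finset.range C).filter
              (fun b => b.1 % 2 = 1 ∧ b.2 % 2 = 1)) \ Bad} =>
            (fun j : Fin k =>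
              if (β j).1 % 2 = 0 ∧ (β j).2 % 2 = 0 ∧
                  (β j).1 < (b : ℕ × ℕ).1 ∧ (β j).2 < (b : ℕ × ℕ).2
              then (1 : ℝ) else 0)) :=
  stmt10_general n A α i k q β R C hES
end

section
/- The probability p that (a) there exists y ∈ Y with S_i = H_i(y) for all i, and (b) for the lexicographically first such y the value 2D-ORC(x,y) matches the monochromatic color of column y, satisfies p ≥ (|T| / C(n²/A, q/2)^{B+1}) · n^{−0.001q} ≥ 2^{−0.027·q·log n} for sufficiently large n. Consequently, by Markov's inequality, at least a p/2 fraction of x ∈ X succeed with probability at least p/2 over the random pattern. -/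
/-!
Summing the column-monochromaticity bound over the patterns `S ∈ T` gives
`p ≥ |T|/|Ω| · n^{-0.001q}`. The density `|T|/|Ω|` is at least `C(m, q/2)^{-(0.05B+1)}`,
and with `L = log n` we have `log C(m, q/2) ≤ (q/2) · 1002 · log L` (as `m ≤ q L^1001`) and
`B log L ≤ 1.01 L / 997`, so the total loss exponent stays below `0.026 q L` once `log L`
is negligible against `L`. The last claim is the reverse Markov inequality for the success
probability of `x`, which is bounded by `1` and has mean `p`.
-/

open Real Finset Filter

namespace Finset

variable {α β : Type*}

theorem card_filter_product_eq_sum_left (s : Finset α) (t : Finset β) (r : α → β → Prop)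
    [∀ a b, Decidable (r a b)] :
    #{x ∈ s ×ˢ t | r x.1 x.2} = ∑ a ∈ s, #{b ∈ t | r a b} := by
  simp only [card_filter, sum_product]

theorem card_filter_product_eq_sum_right (s : Finset α) (t : Finset β) (r : α → β → Prop)
    [∀ a b, Decidable (r a b)] :
    #{x ∈ s ×ˢ t | r x.1 x.2} = ∑ b ∈ t, #{a ∈ s | r a b} := by
  simp only [card_filter, sum_product_right]

theorem card_mul_le_card_filter_product (s : Finset α) (t : Finset β) (r : α → β → Prop)
    [∀ a b, Decidable (r a b)] {δ : ℝ} (h : ∀ a ∈ s, δ * #t ≤ #{b ∈ t | r a b}) :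
    #s * (δ * #t) ≤ #{x ∈ s ×ˢ t | r x.1 x.2} := by
  rw [card_filter_product_eq_sum_left, Nat.cast_sum, ← nsmul_eq_mul]
  exact card_nsmul_le_sum s _ _ h

theorem exists_subset_half_le_of_mul_card_le_sum {ι : Type*} (s : Finset ι) (g : ι → ℝ)
    {p : ℝ} (hp : 0 ≤ p) (hg : ∀ i ∈ s, g i ≤ 1) (hmean : p * #s ≤ ∑ i ∈ s, g i) :
    ∃ t ⊆ s, p / 2 * #s ≤ #t ∧ ∀ i ∈ t, p / 2 ≤ g i := by
  classical
  refine ⟨{i ∈ s | p / 2 ≤ g i}, filter_subset _ _, ?_, fun i hi => (mem_filter.1 hi).2⟩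
  have hlarge : ∑ i ∈ s with p / 2 ≤ g i, g i ≤ #{i ∈ s | p / 2 ≤ g i} := by
    simpa using sum_le_card_nsmul _ g 1 fun i hi => hg i (mem_filter.1 hi).1
  have hsmall : ∑ i ∈ s with ¬p / 2 ≤ g i, g i ≤ p / 2 * #s :=
    calc ∑ i ∈ s with ¬p / 2 ≤ g i, g i ≤ #{i ∈ s | ¬p / 2 ≤ g i} • (p / 2) :=
          sum_le_card_nsmul _ g _ fun i hi => (not_le.1 (mem_filter.1 hi).2).le
      _ ≤ p / 2 * #s := by
          rw [nsmul_eq_mul, mul_comm]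
          gcongr
          exact filter_subset _ _
  rw [← sum_filter_add_sum_filter_not s (fun i => p / 2 ≤ g i)] at hmean
  linarith

end Finset

theorem Nat.choose_le_exp_mul_pow {m j : ℕ} {y : ℝ} (hy : 0 ≤ y) (hm : (m : ℝ) ≤ j * y) :
    (m.choose j : ℝ) ≤ (exp 1 * y) ^ j :=
  calc (m.choose j : ℝ) ≤ (m : ℝ) ^ j / j.factorial := Nat.choose_le_pow_div j m
    _ ≤ (j * y) ^ j / j.factorial := by gcongr
    _ = y ^ j * ((j : ℝ) ^ j / j.factorial) := by ring
    _ ≤ y ^ j * exp j := by gcongr; exact pow_div_factorial_le_exp _ (Nat.cast_nonneg j) j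
    _ = (exp 1 * y) ^ j := by rw [← exp_one_pow, mul_pow, mul_comm]

theorem logb_choose_half_le {m q : ℕ} {L : ℝ} (hL : 6 ≤ L) (hq : 2 ∣ q)
    (hm : (m : ℝ) ≤ q * L ^ 1001) :
    logb 2 (m.choose (q / 2)) ≤ 501 * q * logb 2 L := by
  obtain ⟨j, rfl⟩ := hq
  rw [Nat.mul_div_cancel_left j two_pos]
  have hchoose : (m.choose j : ℝ) ≤ (L ^ 1002) ^ j :=
    calc (m.choose j : ℝ) ≤ (exp 1 * (2 * L ^ 1001)) ^ j :=
          Nat.choose_le_exp_mul_pow (by positivity) (by push_cast at hm; linarith)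
      _ ≤ (L ^ 1002) ^ j := by
          gcongr
          have : exp 1 * 2 ≤ L := by linarith [exp_one_lt_d9]
          calc exp 1 * (2 * L ^ 1001) = exp 1 * 2 * L ^ 1001 := by ring
            _ ≤ L * L ^ 1001 := by gcongr
            _ = L ^ 1002 := by ring
  have hℓ : 0 ≤ logb 2 L := logb_nonneg one_lt_two (by linarith)
  rcases (Nat.cast_nonneg (α := ℝ) (m.choose j)).eq_or_lt with h0 | hpos
  · rw [← h0, logb_zero]; positivity
  calc logb 2 (m.choose j) ≤ logb 2 ((L ^ 1002) ^ j) := logb_le_logb_of_le one_lt_two hpos hchoose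
    _ = 501 * ↑(2 * j) * logb 2 L := by rw [logb_pow, logb_pow]; push_cast; ring

theorem mul_logb_choose_half_le {m q B : ℕ} {L : ℝ} (hL : 6 ≤ L)
    (hℓ : logb 2 L ≤ 0.000001 * L) (hq : 2 ∣ q) (hm : (m : ℝ) ≤ q * L ^ 1001)
    (hB : 997 * B * logb 2 L ≤ 1.01 * L) :
    (0.05 * B + 1) * logb 2 (m.choose (q / 2)) ≤ 0.026 * q * L := by
  have hq0 : (0 : ℝ) ≤ q := q.cast_nonneg
  have hγ := mul_le_mul_of_nonneg_left (logb_choose_half_le hL hq hm)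
    (by positivity : (0 : ℝ) ≤ 0.05 * B + 1)
  nlinarith [mul_le_mul_of_nonneg_left hB hq0, mul_le_mul_of_nonneg_left hℓ hq0]

theorem two_rpow_le_div_mul_rpow {c t ω x a e r : ℝ} {b : ℕ} (hc : 0 < c) (hx : 0 < x)
    (ht : c ^ a ≤ t) (hω : ω = c ^ b) (hr : r ≤ (a - b) * logb 2 c + e * logb 2 x) :
    2 ^ r ≤ t / ω * x ^ e :=
  calc (2 : ℝ) ^ r ≤ 2 ^ ((a - b) * logb 2 c + e * logb 2 x) :=
        rpow_le_rpow_of_exponent_le one_le_two hr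
    _ = c ^ a / c ^ b * x ^ e := by
        rw [rpow_add two_pos, mul_comm _ (logb 2 c), mul_comm e, rpow_mul zero_le_two,
          rpow_mul zero_le_two, rpow_logb two_pos (by norm_num) hc,
          rpow_logb two_pos (by norm_num) hx, rpow_sub hc, rpow_natCast]
    _ ≤ t / ω * x ^ e := by rw [hω]; gcongr

theorem eventually_le_logb_and_logb_logb_le (A : ℝ) {ε : ℝ} (hε : 0 < ε) :
    ∀ᶠ n : ℕ in atTop, A ≤ logb 2 n ∧ logb 2 (logb 2 n) ≤ ε * logb 2 n := by
  have hL : ∀ᶠ L : ℝ in atTop, A ≤ L ∧ logb 2 L ≤ ε * L := by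
    filter_upwards [eventually_ge_atTop (max A 0),
      (isLittleO_logb_id_atTop (b := 2)).bound hε] with L hAL hlog
    rw [norm_eq_abs, norm_eq_abs, id, abs_of_nonneg ((le_max_right A 0).trans hAL)] at hlog
    exact ⟨(le_max_left A 0).trans hAL, (le_abs_self _).trans hlog⟩
  exact ((tendsto_logb_atTop one_lt_two).comp tendsto_natCast_atTop_atTop).eventually hL

open Classical Real Finset in
/-- Probability lower bound in Case 2: sampling a uniform hitting pattern `S` from
`Ω` (with `|Ω| = C(m, q/2)^{B+1}`, `m = n²/A`) and an independent uniform `x ∈ X`,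
the probability `p` that `S` is the hitting pattern of some `y ∈ Y` (via the
canonical choice `ypat`) and that `2D-ORC(x,y)` matches the monochromatic color
of column `y` satisfies `p ≥ (|T|/|Ω|)·n^{−0.001q} ≥ 2^{−0.027·q·log n}`.
Consequently, by Markov's inequality, at least a `p/2`-fraction of `x ∈ X`
succeed with probability at least `p/2` over the random pattern. -/
theorem stmt11 :
    ∃ N : ℕ, ∀ n ≥ N, ∀ k q m B : ℕ,
      1 ≤ q → 2 ∣ q → Real.sqrt n ≤ (k : ℝ) → (k : ℝ) ≤ (n : ℝ) →
      (q : ℝ) * (Real.logb 2 n) ^ 999 ≤ (k : ℝ) →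
      (k : ℝ) ≤ (q : ℝ) * (Real.logb 2 n) ^ 1001 →
      (q : ℝ) ≤ (m : ℝ) → (m : ℝ) ≤ (k : ℝ) →
      (B : ℝ) ≤ 1.01 * Real.logb 2 k / (997 * Real.logb 2 (Real.logb 2 n)) →
      ∀ (PT XT YT ZT : Type) [Fintype PT] [Fintype XT]
        (Ω T : Finset PT) (X : Finset XT) (Y : Finset YT)
        (f : XT → YT → ZT) (ypat : PT → YT) (col : YT → ZT),
      X.Nonempty → T ⊆ Ω →
      (Ω.card : ℝ) = (Nat.choose m (q / 2) : ℝ) ^ (B + 1) →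
      ((Nat.choose m (q / 2) : ℝ)) ^ ((0.95 : ℝ) * B) ≤ (T.card : ℝ) →
      (∀ S ∈ T, ypat S ∈ Y) →
      -- the rectangle X × Y is n^{−0.001 q}-column-monochromatic with colors `col`
      (∀ y ∈ Y, (n : ℝ) ^ (-(0.001 : ℝ) * q) * X.card ≤
          ((X.filter (fun x => f x y = col y)).card : ℝ)) →
      ((T.card : ℝ) / Ω.card * (n : ℝ) ^ (-(0.001 : ℝ) * q) ≤
        (((T ×ˢ X).filter
            (fun sx => f sx.2 (ypat sx.1) = col (ypat sx.1))).card : ℝ)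
          / ((Ω.card : ℝ) * X.card))
      ∧ ((2 : ℝ) ^ (-(0.027 : ℝ) * q * Real.logb 2 n) ≤
        (((T ×ˢ X).filter
            (fun sx => f sx.2 (ypat sx.1) = col (ypat sx.1))).card : ℝ)
          / ((Ω.card : ℝ) * X.card))
      ∧ ∃ Xb ⊆ X,
          ((((T ×ˢ X).filter
              (fun sx => f sx.2 (ypat sx.1) = col (ypat sx.1))).card : ℝ)
            / ((Ω.card : ℝ) * X.card)) / 2 * X.card ≤ (Xb.card : ℝ)
          ∧ ∀ x ∈ Xb,
            ((((T ×ˢ X).filter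
                (fun sx => f sx.2 (ypat sx.1) = col (ypat sx.1))).card : ℝ)
              / ((Ω.card : ℝ) * X.card)) / 2 ≤
              ((T.filter (fun S => f x (ypat S) = col (ypat S))).card : ℝ) / Ω.card := by
  obtain ⟨N, hN⟩ := Filter.eventually_atTop.1
    (eventually_le_logb_and_logb_logb_le 6 (by norm_num : (0 : ℝ) < 0.000001))
  refine ⟨N, fun n hn k q m B hq1 hq2 _ hkn _ hkq hqm hmk hB PT XT YT ZT _ _ Ω T X Y f ypat col
    hX hTΩ hΩ hT hyY hmono => ?_⟩
  obtain ⟨hL, hℓ⟩ := hN n hn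
  have hqm_nat : q ≤ m := mod_cast hqm
  have hk : (0 : ℝ) < k := by linarith [(mod_cast hq1 : (1 : ℝ) ≤ q)]
  have hc : (0 : ℝ) < m.choose (q / 2) := mod_cast Nat.choose_pos (by omega)
  have hΩpos : (0 : ℝ) < #Ω := hΩ ▸ pow_pos hc _
  have hXpos : (0 : ℝ) < #X := mod_cast hX.card_pos
  set p := (#{sx ∈ T ×ˢ X | f sx.2 (ypat sx.1) = col (ypat sx.1)} : ℝ) / (#Ω * #X) with hp
  have hdensity : (#T : ℝ) / #Ω * (n : ℝ) ^ (-(0.001 : ℝ) * q) ≤ p :=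
    calc (#T : ℝ) / #Ω * (n : ℝ) ^ (-(0.001 : ℝ) * q)
        = #T * ((n : ℝ) ^ (-(0.001 : ℝ) * q) * #X) / (#Ω * #X) := by field_simp
      _ ≤ p := by
          rw [hp]
          gcongr
          exact card_mul_le_card_filter_product T X (fun S x => f x (ypat S) = col (ypat S))
            fun S hS => hmono _ (hyY S hS)
  refine ⟨hdensity, le_trans ?_ hdensity, ?_⟩
  · have hBℓ : 997 * B * logb 2 (logb 2 n) ≤ 1.01 * logb 2 n := by
      have hℓpos : 0 < logb 2 (logb 2 n) := logb_pos one_lt_two (by linarith)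
      have hlogk : logb 2 k ≤ logb 2 n := logb_le_logb_of_le one_lt_two hk hkn
      rw [le_div_iff₀ (by positivity)] at hB
      linarith
    have hkey := mul_logb_choose_half_le hL hℓ hq2 (hmk.trans hkq) hBℓ
    refine two_rpow_le_div_mul_rpow hc (hk.trans_le hkn) hT hΩ ?_
    push_cast
    linarith
  · refine exists_subset_half_le_of_mul_card_le_sum X _ (by positivity)
      (fun x _ => div_le_one_of_le₀ ?_ hΩpos.le) ?_
    · exact mod_cast (card_filter_le _ _).trans (card_le_card hTΩ)
    · rw [← sum_div, ← Nat.cast_sum, ← card_filter_product_eq_sum_right, hp,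
        div_mul_eq_mul_div, mul_div_mul_right _ _ hXpos.ne']
end

section
/- Under the above hypotheses, Pr[E_i] ≤ 4^{|I_i|}·2^{−0.025·(n/γ)·log log n}; in particular, since |I_i| ≤ √n, for sufficiently large n, Pr[E_i] ≤ 2^{−0.02·(n/γ)·log log n}. The proof takes a union bound over subsets S ⊆ I_i with ∑_{(I_A,I_B)∈S}|I_B| ≥ n/(8γ), and for each S bounds Pr[∧_{(I_A,I_B)∈S} E(I_A,I_B)] by the product of conditional probabilities, each at most 2·2^{−0.2|I_B| log log n}. -/
/-!
For an outcome in `Ei`, the pairs whose events occur form a subset of `I` of weight at least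
`n/(8γ)`. A union bound over the at most `2^|I|` such subsets, and for each subset the chain rule
for conditional probabilities along the order of `I`, give
`Pr[Ei] ≤ 2^|I| · 2^|I| · 2^{-0.2 · (n/(8γ)) · log log n}`.
For the second bound, `|I| ≤ √n` since every pair has weight at least `√n` and the total weight is
at most `n`, while the restriction on `c` gives `log^c n ≤ n^{0.01}`, hence `γ ≤ 0.0025 √n` for
large `n`; so the factor `4^|I| ≤ 2^{2√n}` is absorbed by `2^{-0.005 (n/γ) log log n}`.
-/

open Finset Real Filter

section JointEvent

variable {Ω ι : Type*} [Fintype Ω]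

-- Classical decidability, so that `jointEvent E S` is literally the event written in `stmt13`.
open Classical in
noncomputable def jointEvent (E : ι → Finset Ω) (S : Finset ι) : Finset Ω :=
  univ.filter fun ω => ∀ r ∈ S, ω ∈ E r

lemma mem_jointEvent {E : ι → Finset Ω} {S : Finset ι} {ω : Ω} :
    ω ∈ jointEvent E S ↔ ∀ r ∈ S, ω ∈ E r := by
  simp [jointEvent]

lemma jointEvent_empty (E : ι → Finset Ω) : jointEvent E ∅ = univ := by
  ext; simp [mem_jointEvent]

lemma jointEvent_insert [DecidableEq Ω] [DecidableEq ι] (E : ι → Finset Ω) (a : ι)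
    (S : Finset ι) : jointEvent E (insert a S) = E a ∩ jointEvent E S := by
  ext; simp [mem_jointEvent]

lemma sum_jointEvent_le_prod [DecidableEq Ω] [LinearOrder ι] {μ : Ω → ℝ} {I : Finset ι}
    {E : ι → Finset Ω} {g : ι → ℝ} (hg : ∀ p, 0 ≤ g p)
    (hcond : ∀ p ∈ I, ∀ S ⊆ I.filter (· < p),
      ∑ ω ∈ E p ∩ jointEvent E S, μ ω ≤ g p * ∑ ω ∈ jointEvent E S, μ ω)
    {S : Finset ι} (hS : S ⊆ I) :
    ∑ ω ∈ jointEvent E S, μ ω ≤ (∑ ω, μ ω) * ∏ p ∈ S, g p := by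
  induction S using Finset.induction_on_max with
  | empty => rw [jointEvent_empty, prod_empty, mul_one]
  | insert a S ha ih =>
    have hSI : S ⊆ I := (subset_insert a S).trans hS
    have hSa : S ⊆ I.filter (· < a) := fun r hr => mem_filter.2 ⟨hSI hr, ha r hr⟩
    rw [jointEvent_insert, prod_insert fun haS => (ha a haS).false]
    calc ∑ ω ∈ E a ∩ jointEvent E S, μ ω ≤ g a * ∑ ω ∈ jointEvent E S, μ ω :=
          hcond a (hS (mem_insert_self a S)) S hSa
      _ ≤ g a * ((∑ ω, μ ω) * ∏ p ∈ S, g p) := mul_le_mul_of_nonneg_left (ih hSI) (hg a)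
      _ = (∑ ω, μ ω) * (g a * ∏ p ∈ S, g p) := by ring

end JointEvent

lemma sum_sup_le_sum_sum {Ω β : Type*} [DecidableEq Ω] {μ : Ω → ℝ} (hμ : ∀ ω, 0 ≤ μ ω)
    (𝒮 : Finset β) (F : β → Finset Ω) :
    ∑ ω ∈ 𝒮.sup F, μ ω ≤ ∑ S ∈ 𝒮, ∑ ω ∈ F S, μ ω :=
  𝒮.apply_sup_le_sum (f := fun T => ∑ ω ∈ T, μ ω) sum_empty fun {s t} => by
    have := sum_union_inter (s₁ := s) (s₂ := t) (f := μ)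
    have := sum_nonneg fun ω (_ : ω ∈ s ∩ t) => hμ ω
    simp only [sup_eq_union]
    linarith

lemma prod_two_mul_two_rpow {ι : Type*} (S : Finset ι) (f : ι → ℝ) (a t : ℝ) :
    ∏ p ∈ S, 2 * (2 : ℝ) ^ (-a * f p * t) = 2 ^ S.card * 2 ^ (-a * (∑ p ∈ S, f p) * t) := by
  rw [prod_mul_distrib, prod_const, ← rpow_sum_of_pos two_pos, mul_sum, sum_mul]

theorem sum_le_four_pow_card_mul_two_rpow {Ω ι : Type*} [Fintype Ω] [DecidableEq Ω]
    [LinearOrder ι] {μ : Ω → ℝ} {I : Finset ι} {E : ι → Finset Ω} {f : ι → ℝ} {A : Finset Ω}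
    {a t w : ℝ} (ha : 0 ≤ a) (ht : 0 ≤ t) (hμ : ∀ ω, 0 ≤ μ ω) (hμ1 : ∑ ω, μ ω = 1)
    (hcond : ∀ p ∈ I, ∀ S ⊆ I.filter (· < p),
      ∑ ω ∈ E p ∩ jointEvent E S, μ ω ≤ 2 * 2 ^ (-a * f p * t) * ∑ ω ∈ jointEvent E S, μ ω)
    (hA : ∀ ω ∈ A, w ≤ ∑ p ∈ I.filter (fun p => ω ∈ E p), f p) :
    ∑ ω ∈ A, μ ω ≤ 4 ^ I.card * 2 ^ (-a * w * t) := by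
  set 𝒮 := I.powerset.filter fun S => w ≤ ∑ p ∈ S, f p
  have hA𝒮 : A ⊆ 𝒮.sup (jointEvent E) := fun ω hω => mem_sup.2
    ⟨I.filter (fun p => ω ∈ E p), mem_filter.2 ⟨mem_powerset.2 (filter_subset _ _), hA ω hω⟩,
      mem_jointEvent.2 fun r hr => (mem_filter.1 hr).2⟩
  have hS : ∀ S ∈ 𝒮, ∑ ω ∈ jointEvent E S, μ ω ≤ 2 ^ I.card * 2 ^ (-a * w * t) := by
    intro S hS
    obtain ⟨hSI, hw⟩ := mem_filter.1 hS
    have hSI := mem_powerset.1 hSI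
    have hexp : -a * (∑ p ∈ S, f p) * t ≤ -a * w * t := by
      nlinarith [mul_le_mul_of_nonneg_left hw (mul_nonneg ha ht)]
    calc ∑ ω ∈ jointEvent E S, μ ω ≤ (∑ ω, μ ω) * ∏ p ∈ S, 2 * (2 : ℝ) ^ (-a * f p * t) :=
          sum_jointEvent_le_prod (fun p => by positivity) hcond hSI
      _ = 2 ^ S.card * 2 ^ (-a * (∑ p ∈ S, f p) * t) := by
          rw [hμ1, one_mul, prod_two_mul_two_rpow]
      _ ≤ 2 ^ I.card * 2 ^ (-a * w * t) :=
          mul_le_mul (pow_le_pow_right₀ one_le_two (card_le_card hSI))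
            (rpow_le_rpow_of_exponent_le one_le_two hexp) (by positivity) (by positivity)
  have h𝒮 : (𝒮.card : ℝ) ≤ 2 ^ I.card := by
    exact_mod_cast (card_filter_le _ _).trans (card_powerset I).le
  calc ∑ ω ∈ A, μ ω ≤ ∑ ω ∈ 𝒮.sup (jointEvent E), μ ω :=
        sum_le_sum_of_subset_of_nonneg hA𝒮 fun ω _ _ => hμ ω
    _ ≤ ∑ S ∈ 𝒮, ∑ ω ∈ jointEvent E S, μ ω := sum_sup_le_sum_sum hμ 𝒮 (jointEvent E)
    _ ≤ 𝒮.card * (2 ^ I.card * 2 ^ (-a * w * t)) := by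
        simpa using sum_le_card_nsmul 𝒮 _ _ hS
    _ ≤ 2 ^ I.card * (2 ^ I.card * 2 ^ (-a * w * t)) := by gcongr
    _ = 4 ^ I.card * 2 ^ (-a * w * t) := by rw [← mul_assoc, ← mul_pow]; norm_num

lemma card_le_of_le_of_sum_le {ι : Type*} {s : Finset ι} {f : ι → ℝ} {a : ℝ} (ha : 0 < a)
    (hf : ∀ p ∈ s, a ≤ f p) (hs : ∑ p ∈ s, f p ≤ a * a) : (s.card : ℝ) ≤ a := by
  have := card_nsmul_le_sum s f a hf
  rw [nsmul_eq_mul] at this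
  exact le_of_mul_le_mul_right (this.trans hs) ha

lemma pow_le_rpow_of_mul_logb_le {b x y t : ℝ} (hb : 1 < b) (hx : 0 < x) (hy : 0 < y) (k : ℕ)
    (h : k * logb b y ≤ t * logb b x) : y ^ k ≤ x ^ t := by
  rwa [← logb_le_logb hb (by positivity) (by positivity), logb_pow,
    logb_rpow_eq_mul_logb_of_pos hx]

lemma eventually_logb_pow_le_mul_rpow (b : ℝ) (k : ℕ) {s ε : ℝ} (hs : 0 < s) (hε : 0 < ε) :
    ∀ᶠ x : ℝ in atTop, logb b x ^ k ≤ ε * x ^ s := by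
  have hlog := ((isLittleO_log_rpow_rpow_atTop (k : ℝ) hs).const_mul_left ((log b)⁻¹ ^ k)).bound hε
  filter_upwards [hlog, eventually_ge_atTop 0] with x hx hx0
  calc logb b x ^ k = (log b)⁻¹ ^ k * log x ^ (k : ℝ) := by
        rw [rpow_natCast, ← mul_pow, inv_mul_eq_div, logb]
    _ ≤ ‖(log b)⁻¹ ^ k * log x ^ (k : ℝ)‖ := le_norm_self _
    _ ≤ ε * ‖x ^ s‖ := hx
    _ = ε * x ^ s := by rw [norm_of_nonneg (rpow_nonneg hx0 _)]

lemma two_le_logb {n : ℝ} (hn : 4 ≤ n) : 2 ≤ logb 2 n :=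
  (le_logb_iff_rpow_le one_lt_two (by linarith)).2 (by norm_num; linarith)

lemma one_le_logb_logb {n : ℝ} (hn : 4 ≤ n) : 1 ≤ logb 2 (logb 2 n) :=
  have := two_le_logb hn
  (le_logb_iff_rpow_le one_lt_two (by linarith)).2 (by norm_num; linarith)

lemma two_mul_sqrt_le {n : ℝ} {c : ℕ} (hn : 4 ≤ n)
    (hlog : logb 2 n ^ 1000 ≤ 0.0025 * n ^ (0.49 : ℝ))
    (hc : (c : ℝ) ≤ logb 2 n / (100 * logb 2 (logb 2 n))) :
    2 * √n ≤ 0.005 * (n / logb 2 n ^ (c + 1000)) * logb 2 (logb 2 n) := by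
  have hLL := one_le_logb_logb hn
  set L := logb 2 n
  have hL : 2 ≤ L := two_le_logb hn
  have hLc : L ^ c ≤ n ^ (0.01 : ℝ) := by
    rw [le_div_iff₀ (by positivity)] at hc
    exact pow_le_rpow_of_mul_logb_le one_lt_two (by linarith) (by linarith) c (by linarith)
  have hγ : L ^ (c + 1000) ≤ 0.0025 * √n :=
    calc L ^ (c + 1000) ≤ n ^ (0.01 : ℝ) * (0.0025 * n ^ (0.49 : ℝ)) := by
          rw [pow_add]; exact mul_le_mul hLc hlog (by positivity) (by positivity)
      _ = 0.0025 * √n := by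
          rw [mul_left_comm, ← rpow_add (by linarith), sqrt_eq_rpow]; norm_num
  have hγpos : 0 < L ^ (c + 1000) := by positivity
  calc 2 * √n ≤ 0.005 * (n / L ^ (c + 1000)) := by
        rw [mul_div_assoc', le_div_iff₀ hγpos]
        nlinarith [sq_sqrt (show 0 ≤ n by linarith), sqrt_nonneg n]
    _ ≤ 0.005 * (n / L ^ (c + 1000)) * logb 2 L := le_mul_of_one_le_right (by positivity) hLL

lemma four_pow_mul_two_rpow_le (k : ℕ) {x y : ℝ} (h : 2 * k + x ≤ y) :
    (4 : ℝ) ^ k * 2 ^ x ≤ 2 ^ y := by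
  rw [show (4 : ℝ) ^ k = 2 ^ (2 * k : ℝ) by
    rw [rpow_mul zero_le_two, rpow_natCast]; norm_num, ← rpow_add two_pos]
  exact rpow_le_rpow_of_exponent_le one_le_two h

open Classical Real Finset in
/-- Sequential conditioning bound.  `I` is a collection of (pairwise-disjoint,
linearly ordered) interval pairs, each with `|I_B| = b p ≥ √n`, total weight
`∑ b p ≤ n`.  If each event `E p` has conditional probability at most
`2·2^{−0.2·b p·log log n}` given any intersection of earlier events, and the
event `Ei` implies that the pairs `p` with `E p` occurring carry total weight at
least `n/(8γ)` (where `γ = log^{c+1000} n`), then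
`Pr[Ei] ≤ 4^{|I|}·2^{−0.025·(n/γ)·log log n}`, and in particular
`Pr[Ei] ≤ 2^{−0.02·(n/γ)·log log n}` for sufficiently large `n`. -/
theorem stmt13 :
    ∃ N : ℕ, ∀ n ≥ N, ∀ c : ℕ, 1 ≤ c →
      (c : ℝ) ≤ Real.logb 2 n / (100 * Real.logb 2 (Real.logb 2 n)) →
      ∀ (Ω ι : Type) [Fintype Ω] [LinearOrder ι]
        (μ : Ω → ℝ) (I : Finset ι) (b : ι → ℕ) (E : ι → Finset Ω) (Ei : Finset Ω),
      (∀ ω, 0 ≤ μ ω) → (∑ ω, μ ω = 1) →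
      (∀ p ∈ I, Real.sqrt n ≤ (b p : ℝ)) →
      ((∑ p ∈ I, (b p : ℝ)) ≤ (n : ℝ)) →
      (∀ p ∈ I, ∀ S ⊆ I.filter (fun p' => p' < p),
        ∑ ω ∈ (E p ∩ Finset.univ.filter (fun ω => ∀ r ∈ S, ω ∈ E r)), μ ω ≤
          2 * 2 ^ (-(0.2 : ℝ) * (b p : ℝ) * Real.logb 2 (Real.logb 2 n)) *
            ∑ ω ∈ Finset.univ.filter (fun ω => ∀ r ∈ S, ω ∈ E r), μ ω) →
      (∀ ω ∈ Ei, (n : ℝ) / (8 * (Real.logb 2 n) ^ (c + 1000)) ≤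
          ∑ p ∈ I.filter (fun p => ω ∈ E p), (b p : ℝ)) →
      (∑ ω ∈ Ei, μ ω ≤ 4 ^ I.card *
          2 ^ (-(0.025 : ℝ) * ((n : ℝ) / (Real.logb 2 n) ^ (c + 1000)) *
            Real.logb 2 (Real.logb 2 n)))
      ∧ (∑ ω ∈ Ei, μ ω ≤
          2 ^ (-(0.02 : ℝ) * ((n : ℝ) / (Real.logb 2 n) ^ (c + 1000)) *
            Real.logb 2 (Real.logb 2 n))) := by
  obtain ⟨N, hN⟩ := ((tendsto_natCast_atTop_atTop.eventually
      (eventually_logb_pow_le_mul_rpow 2 1000 (s := 0.49) (ε := 0.0025) (by norm_num)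
        (by norm_num))).and (eventually_ge_atTop 4)).exists_forall_of_atTop
  refine ⟨N, fun n hn c _ hc Ω ι _ _ μ I b E Ei hμ hμ1 hb hbn hcond hEi => ?_⟩
  obtain ⟨hlog, hn4⟩ := hN n hn
  have hn4 : (4 : ℝ) ≤ n := by exact_mod_cast hn4
  have hunion := sum_le_four_pow_card_mul_two_rpow (by norm_num)
    (zero_le_one.trans (one_le_logb_logb hn4)) hμ hμ1 hcond hEi
  have hbound : ∑ ω ∈ Ei, μ ω ≤ 4 ^ I.card *
      2 ^ (-(0.025 : ℝ) * (n / logb 2 n ^ (c + 1000)) * logb 2 (logb 2 n)) := by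
    convert hunion using 4; ring
  have hcard : (I.card : ℝ) ≤ √n :=
    card_le_of_le_of_sum_le (sqrt_pos.2 (by linarith)) hb (by rwa [mul_self_sqrt (by linarith)])
  have hsqrt := two_mul_sqrt_le hn4 hlog hc
  exact ⟨hbound, hbound.trans (four_pow_mul_two_rpow_le _ (by linarith))⟩
end

section
/- In the honest execution of SIM_D: Merlin sends at most |P(I_A)∩P(I_B)|·log(e|P(I_B)|/|P(I_A)∩P(I_B)|) + O(log n) bits (using log C(m,s) ≤ s·log(em/s)); Bob sends at most |P(I_A)∩P(I_B)|·log(e|P(I_A)|/|P(I_A)∩P(I_B)|) bits; and Alice sends at most 4·|P(I_A)∩P(I_B)|·w bits in expectation over the random hash function, since for a uniform h:[2^w]→[m] with m = |P(I_A)|, the expected number of elements of P(I_A) colliding with a set of s = |P(I_A)∩P(I_B)| hash buckets is at most 2s. -/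
open Classical Real Finset in
lemma choose_le_real (N s : ℕ) (hs1 : 1 ≤ s) (hsN : s ≤ N) :
    (N.choose s : ℝ) ≤ (Real.exp 1 * N / s) ^ s := by
  have hs0 : (0:ℝ) < s := by exact_mod_cast hs1
  have hfac : (0:ℝ) < (s.factorial : ℝ) := by exact_mod_cast s.factorial_pos
  have h1 : (N.choose s : ℝ) ≤ (N:ℝ) ^ s / s.factorial := Nat.choose_le_pow_div s N
  have h2 : (s:ℝ) ^ s / s.factorial ≤ Real.exp s := Real.pow_div_factorial_le_exp (x := (s:ℝ)) hs0.le s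
  have key : (s:ℝ) ^ s ≤ Real.exp s * s.factorial := by
    rwa [div_le_iff₀ hfac] at h2
  have hexp : Real.exp (s:ℝ) = (Real.exp 1) ^ s := by
    rw [← Real.exp_nat_mul, mul_one]
  refine h1.trans ?_
  rw [div_pow, mul_pow, ← hexp, div_le_div_iff₀ hfac (pow_pos hs0 s)]
  have hN : (0:ℝ) ≤ (N:ℝ) ^ s := by positivity
  nlinarith [key, hN, mul_le_mul_of_nonneg_left key hN]

open Classical Real Finset in
lemma logb_choose_le_s14 (N s : ℕ) (hs1 : 1 ≤ s) (hsN : s ≤ N) :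
    Real.logb 2 (N.choose s) ≤ (s : ℝ) * Real.logb 2 (Real.exp 1 * N / s) := by
  have hpos : (0:ℝ) < (N.choose s : ℝ) := by exact_mod_cast Nat.choose_pos hsN
  calc Real.logb 2 (N.choose s) ≤ Real.logb 2 ((Real.exp 1 * N / s) ^ s) := by
        apply (Real.logb_le_logb one_lt_two hpos (by
          have := choose_le_real N s hs1 hsN; linarith)).mpr
        exact choose_le_real N s hs1 hsN
    _ = (s : ℝ) * Real.logb 2 (Real.exp 1 * N / s) := Real.logb_pow 2 _ s

open Classical Finset in
lemma count_pair (N m : ℕ) (a b : Fin N) (hab : a ≠ b) :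
    (Finset.univ.filter (fun h : Fin N → Fin m => h a = h b)).card = m ^ (N - 1) := by
  rw [← Fintype.card_subtype]
  have e : {h : Fin N → Fin m // h a = h b} ≃ ({j : Fin N // j ≠ a} → Fin m) :=
  { toFun := fun h j => h.1 j.1
    invFun := fun g => ⟨fun j => if hj : j = a then g ⟨b, Ne.symm hab⟩ else g ⟨j, hj⟩, by
      simp [Ne.symm hab]⟩
    left_inv := fun h => by
      apply Subtype.ext
      funext j
      dsimp
      split_ifs with hj
      · subst hj; exact h.2.symm
      · rfl
    right_inv := fun g => by
      funext j
      dsimp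
      rw [dif_neg j.2] }
  rw [Fintype.card_congr e, Fintype.card_fun, Fintype.card_fin]
  congr 1
  rw [Fintype.card_subtype_compl, Fintype.card_subtype_eq, Fintype.card_fin]

open Classical Finset in
lemma sum_count_le (w m s : ℕ) (PA PB : Finset (Fin (2 ^ w)))
    (hs : s = (PA ∩ PB).card) (hm : m = PA.card) :
    ∑ h : Fin (2 ^ w) → Fin m, (PA.filter (fun a => ∃ b ∈ PA ∩ PB, h a = h b)).card
      ≤ 2 * s * m ^ (2 ^ w) := by
  set S := PA ∩ PB with hS
  have hswap : ∑ h : Fin (2 ^ w) → Fin m,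
      (PA.filter (fun a => ∃ b ∈ S, h a = h b)).card
      = ∑ a ∈ PA, (univ.filter fun h : Fin (2 ^ w) → Fin m => ∃ b ∈ S, h a = h b).card := by
    simp_rw [Finset.card_filter]
    rw [Finset.sum_comm]
  have h2w : 1 ≤ 2 ^ w := Nat.one_le_two_pow
  have hmpow : m * m ^ (2 ^ w - 1) = m ^ (2 ^ w) := by
    calc m * m ^ (2 ^ w - 1) = m ^ (2 ^ w - 1 + 1) := (pow_succ' m _).symm
      _ = m ^ (2 ^ w) := by rw [Nat.sub_add_cancel h2w]
  have hcardfun : (univ : Finset (Fin (2 ^ w) → Fin m)).card = m ^ (2 ^ w) := by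
    rw [card_univ, Fintype.card_fun, Fintype.card_fin, Fintype.card_fin]
  have hbound1 : ∀ a ∈ PA \ S,
      (univ.filter fun h : Fin (2 ^ w) → Fin m => ∃ b ∈ S, h a = h b).card
        ≤ s * m ^ (2 ^ w - 1) := by
    intro a ha
    have haS : a ∉ S := (mem_sdiff.mp ha).2
    calc (univ.filter fun h : Fin (2 ^ w) → Fin m => ∃ b ∈ S, h a = h b).card
        ≤ (S.biUnion fun b => univ.filter fun h : Fin (2 ^ w) → Fin m => h a = h b).card := by
          apply card_le_card
          intro h hh
          rw [mem_filter] at hh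
          obtain ⟨-, b, hb, he⟩ := hh
          exact mem_biUnion.mpr ⟨b, hb, mem_filter.mpr ⟨mem_univ _, he⟩⟩
      _ ≤ ∑ b ∈ S, (univ.filter fun h : Fin (2 ^ w) → Fin m => h a = h b).card :=
          card_biUnion_le
      _ = ∑ _b ∈ S, m ^ (2 ^ w - 1) := by
          refine Finset.sum_congr rfl fun b hb => ?_
          exact count_pair (2 ^ w) m a b (fun hab => haS (hab ▸ hb))
      _ = s * m ^ (2 ^ w - 1) := by rw [Finset.sum_const, smul_eq_mul, ← hs]
  have hbound2 : ∀ a ∈ S,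
      (univ.filter fun h : Fin (2 ^ w) → Fin m => ∃ b ∈ S, h a = h b).card
        ≤ m ^ (2 ^ w) := fun a _ => (card_filter_le _ _).trans hcardfun.le
  have hSsub : S ⊆ PA := inter_subset_left
  rw [hswap, ← Finset.sum_sdiff hSsub]
  have hA : ∑ a ∈ PA \ S, (univ.filter fun h : Fin (2 ^ w) → Fin m => ∃ b ∈ S, h a = h b).card
      ≤ (PA \ S).card * (s * m ^ (2 ^ w - 1)) := by
    calc _ ≤ (PA \ S).card • (s * m ^ (2 ^ w - 1)) := Finset.sum_le_card_nsmul _ _ _ hbound1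
      _ = _ := by rw [smul_eq_mul]
  have hB : ∑ a ∈ S, (univ.filter fun h : Fin (2 ^ w) → Fin m => ∃ b ∈ S, h a = h b).card
      ≤ s * m ^ (2 ^ w) := by
    calc _ ≤ S.card • m ^ (2 ^ w) := Finset.sum_le_card_nsmul _ _ _ hbound2
      _ = _ := by rw [smul_eq_mul, ← hs]
  have hsd : (PA \ S).card ≤ m := hm ▸ card_le_card (sdiff_subset)
  have hA' : (PA \ S).card * (s * m ^ (2 ^ w - 1)) ≤ s * m ^ (2 ^ w) := by
    calc (PA \ S).card * (s * m ^ (2 ^ w - 1)) ≤ m * (s * m ^ (2 ^ w - 1)) :=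
        Nat.mul_le_mul_right _ hsd
      _ = s * m ^ (2 ^ w) := by rw [← hmpow]; ring
  calc _ ≤ s * m ^ (2 ^ w) + s * m ^ (2 ^ w) := Nat.add_le_add (hA.trans hA') hB
    _ = 2 * s * m ^ (2 ^ w) := by ring

open Classical Real Finset in
/-- Cost accounting of the simulation protocol `SIM_D`, with `s = |P(I_A) ∩ P(I_B)|`:
Merlin sends at most `s·log(e|P(I_B)|/s) + O(log n)` bits (via
`log C(m,s) ≤ s·log(em/s)`); Bob sends at most `s·log(e|P(I_A)|/s)` bits; and
Alice sends at most `4·s·w` bits in expectation over a uniformly random hash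
function `h : [2^w] → [|P(I_A)|]`, since the expected number of cells of `P(I_A)`
whose hash value collides with the hash of the `s` cells of `P(I_A) ∩ P(I_B)` is
at most `2s` (each cell costs `2w` bits: address and contents). -/
theorem stmt14 (n w : ℕ) (hn : 1 ≤ n)
    (PA PB : Finset (Fin (2 ^ w))) (s m : ℕ)
    (hs : s = (PA ∩ PB).card) (hs1 : 1 ≤ s) (hm : m = PA.card) :
    -- Bob's message: a subset of size s of hash values from a universe of size |P(I_A)|
    (Real.logb 2 (Nat.choose PA.card s) ≤
      (s : ℝ) * Real.logb 2 (Real.exp 1 * PA.card / s))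
    -- Merlin's message: the subset of size s of the ordered list of |P(I_B)| cells …
    ∧ (Real.logb 2 (Nat.choose PB.card s) ≤
      (s : ℝ) * Real.logb 2 (Real.exp 1 * PB.card / s))
    -- … together with the three sizes, an extra O(log n) bits
    ∧ (Real.logb 2 ((n + 1) ^ 3 * Nat.choose PB.card s) ≤
      (s : ℝ) * Real.logb 2 (Real.exp 1 * PB.card / s) + 4 * Real.logb 2 (n + 1))
    -- expected number of cells of P(I_A) colliding with the hash bucket set is ≤ 2s
    ∧ ((∑ h : Fin (2 ^ w) → Fin m,
        ((PA.filter (fun a => ∃ b ∈ PA ∩ PB, h a = h b)).card : ℝ))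
          / (m : ℝ) ^ (2 ^ w) ≤ 2 * s)
    -- hence Alice sends at most 4·s·w bits in expectation
    ∧ ((∑ h : Fin (2 ^ w) → Fin m,
        2 * (w : ℝ) * ((PA.filter (fun a => ∃ b ∈ PA ∩ PB, h a = h b)).card : ℝ))
          / (m : ℝ) ^ (2 ^ w) ≤ 4 * s * w) := by
  have hsA : s ≤ PA.card := hs ▸ card_le_card inter_subset_left
  have hsB : s ≤ PB.card := hs ▸ card_le_card inter_subset_right
  have part1 := logb_choose_le_s14 PA.card s hs1 hsA
  have part2 := logb_choose_le_s14 PB.card s hs1 hsB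
  have hm1 : 1 ≤ m := hm ▸ hs1.trans hsA
  have hD : (0:ℝ) < (m : ℝ) ^ (2 ^ w) := by
    have : (0:ℝ) < (m:ℝ) := by exact_mod_cast hm1
    positivity
  have part4 : (∑ h : Fin (2 ^ w) → Fin m,
        ((PA.filter (fun a => ∃ b ∈ PA ∩ PB, h a = h b)).card : ℝ))
          / (m : ℝ) ^ (2 ^ w) ≤ 2 * s := by
    rw [div_le_iff₀ hD]
    have key := sum_count_le w m s PA PB hs hm
    calc (∑ h : Fin (2 ^ w) → Fin m,
          ((PA.filter (fun a => ∃ b ∈ PA ∩ PB, h a = h b)).card : ℝ))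
        = ((∑ h : Fin (2 ^ w) → Fin m,
            (PA.filter (fun a => ∃ b ∈ PA ∩ PB, h a = h b)).card : ℕ) : ℝ) := by
          push_cast; rfl
      _ ≤ ((2 * s * m ^ (2 ^ w) : ℕ) : ℝ) := by exact_mod_cast key
      _ = 2 * (s : ℝ) * (m : ℝ) ^ (2 ^ w) := by push_cast; ring
  refine ⟨part1, part2, ?_, part4, ?_⟩
  · -- part 3
    have hCpos : (0:ℝ) < (Nat.choose PB.card s : ℝ) := by
      exact_mod_cast Nat.choose_pos hsB
    have hn1 : (0:ℝ) < (n : ℝ) + 1 := by positivity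
    have hlogn : 0 ≤ Real.logb 2 ((n : ℝ) + 1) :=
      Real.logb_nonneg one_lt_two (by linarith)
    rw [Real.logb_mul (by positivity) (ne_of_gt hCpos), Real.logb_pow]
    linarith [part2]
  · -- part 5
    rw [← Finset.mul_sum, mul_div_assoc]
    calc 2 * (w : ℝ) * ((∑ h : Fin (2 ^ w) → Fin m,
          ((PA.filter (fun a => ∃ b ∈ PA ∩ PB, h a = h b)).card : ℝ))
            / (m : ℝ) ^ (2 ^ w))
        ≤ 2 * (w : ℝ) * (2 * s) := by
          apply mul_le_mul_of_nonneg_left part4 (by positivity)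
      _ = 4 * s * w := by ring
end

section
/- For each transcript π = (m_mer, π_A, π_B) of a deterministic valid 4ANC protocol and each y ∈ Y_π, the correct Megan message M_meg(x, y, m_mer) is the same for all x ∈ X_π. (Otherwise, for x₁, x₂ ∈ X_π with M_meg(x₁,y,m_mer) ≠ M_meg(x₂,y,m_mer), Bob's proceed/reject decision, depending only on (y, π, m_meg), would cause him to proceed on some incorrect Megan message, contradicting validity.) -/
/-! Bob's column side `Y_π` and Alice's row side `X_π` of a transcript form a rectangle, so every
`x ∈ X_π` produces the same transcript `π` against `y` and the very Megan message on which Bob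
proceeds with `y`. Validity then forces this one message to equal `M_meg(x, y, m_mer)` for each
such `x`. -/

section Rectangle

variable {X Y M G T : Type*} (run : X → Y → M → G → T)

theorem run_eq_of_rectangle
    (Hrect : ∀ x x' y y' m m' g g',
      run x y m g = run x' y' m' g' → run x y' m' g' = run x y m g)
    {x x' : X} {y y' : Y} {m m' : M} {g g' : G} {t : T}
    (h : run x y m g = t) (h' : run x' y' m' g' = t) :
    run x y' m' g' = t :=
  (Hrect x x' y y' m m' g g' (h.trans h'.symm)).trans h

theorem eq_of_proceed {R : Type*} (Mmeg : X → Y → M → G) (proceed : Y → M → G → T → R) {ok : R}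
    (Hvalid : ∀ x y m g, proceed y m g (run x y m g) = ok ↔ g = Mmeg x y m)
    {x : X} {y : Y} {m : M} {g : G} {t : T}
    (hrun : run x y m g = t) (hproceed : proceed y m g t = ok) :
    g = Mmeg x y m :=
  (Hvalid x y m g).mp (hrun ▸ hproceed)

end Rectangle

/-- In a deterministic valid `4ANC` protocol, for each transcript
`π = (m_mer, π_A, π_B)` (here `t`), and each `y` in the column side `Y_π` of the
rectangle `R_π`, the correct Megan message `M_meg(x, y, m_mer)` is the same for
all `x` in the row side `X_π`. -/
theorem stmt15 {X Y : Type}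
    (Mmeg : X → Y → List Bool → List Bool)
    (run : X → Y → List Bool → List Bool → List Bool × List Bool)
    (proceed : Y → List Bool → List Bool → List Bool × List Bool → Bool)
    -- rectangle property of the deterministic Alice–Bob interaction
    (Hrect : ∀ x x' y y' m m' g g',
      run x y m g = run x' y' m' g' → run x y' m' g' = run x y m g)
    -- validity: Bob proceeds if and only if Megan's message is the correct one
    (Hvalid : ∀ x y m g, proceed y m g (run x y m g) = true ↔ g = Mmeg x y m)
    (mmer : List Bool) (t : List Bool × List Bool)
    (x₁ x₂ : X) (y : Y)
    (hx₁ : ∃ y' g, run x₁ y' mmer g = t ∧ proceed y' mmer g t = true)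
    (hx₂ : ∃ y' g, run x₂ y' mmer g = t ∧ proceed y' mmer g t = true)
    (hy : ∃ x' g, run x' y mmer g = t ∧ proceed y mmer g t = true) :
    Mmeg x₁ y mmer = Mmeg x₂ y mmer := by
  obtain ⟨y₁, g₁, hrun₁, -⟩ := hx₁
  obtain ⟨y₂, g₂, hrun₂, -⟩ := hx₂
  obtain ⟨x', g, hrun, hproceed⟩ := hy
  have hg₁ := eq_of_proceed run Mmeg proceed Hvalid
    (run_eq_of_rectangle run Hrect hrun₁ hrun) hproceed
  have hg₂ := eq_of_proceed run Mmeg proceed Hvalid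
    (run_eq_of_rectangle run Hrect hrun₂ hrun) hproceed
  exact hg₁.symm.trans hg₂
end

section
/- Under the above hypotheses, ∑_π μ(R̃_π) ≥ δ/2. Moreover there exists a single Merlin message m̂_mer such that ∑_{π with Merlin message m̂_mer} μ(R̃_π) ≥ (δ/2)·2^{−c_M}. -/
/-!
Call a column of `R_π` heavy when the good pairs with matching Merlin message carry at least a
`c = (δ/2)·2^{-c_M}` fraction of its mass. By Markov's inequality the light columns hold at most
`c · ∑_π μ(R_π) ≤ δ/2` of the good mass, so the heavy columns hold at least `δ/2` of it, and hence
at least `δ/2` of rectangle mass. Pigeonholing this mass over the at most `2^{c_M}` Merlin messages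
gives the second claim.
-/

open Finset

section ColumnExtraction

variable {ι Y β : Type*}

theorem sum_le_sum_filter_add_mul_sum {s : Finset Y} {f g : Y → ℝ} {c : ℝ} (hc : 0 ≤ c)
    (hf : ∀ y, 0 ≤ f y) (hgf : ∀ y, g y ≤ f y) :
    ∑ y ∈ s, g y ≤ ∑ y ∈ s with c * f y ≤ g y, f y + c * ∑ y ∈ s, f y := by
  have hbad : ∑ y ∈ s with ¬c * f y ≤ g y, g y ≤ c * ∑ y ∈ s, f y :=
    calc ∑ y ∈ s with ¬c * f y ≤ g y, g y
        ≤ ∑ y ∈ s with ¬c * f y ≤ g y, c * f y :=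
          sum_le_sum fun y hy => (not_le.mp (mem_filter.mp hy).2).le
      _ ≤ ∑ y ∈ s, c * f y :=
          sum_le_sum_of_subset_of_nonneg (filter_subset _ _) fun y _ _ => mul_nonneg hc (hf y)
      _ = c * ∑ y ∈ s, f y := (mul_sum ..).symm
  rw [← sum_filter_add_sum_filter_not s (fun y => c * f y ≤ g y) g]
  exact add_le_add (sum_le_sum fun y _ => hgf y) hbad

theorem sub_mul_le_sum_sum_filter {P : Finset ι} {T : ι → Finset Y} {f g : ι → Y → ℝ}
    {c K δ : ℝ} (hc : 0 ≤ c) (hf : ∀ i y, 0 ≤ f i y) (hgf : ∀ i y, g i y ≤ f i y)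
    (hK : ∑ i ∈ P, ∑ y ∈ T i, f i y ≤ K) (hδ : δ ≤ ∑ i ∈ P, ∑ y ∈ T i, g i y) :
    δ - c * K ≤ ∑ i ∈ P, ∑ y ∈ T i with c * f i y ≤ g i y, f i y := by
  have hsplit : ∑ i ∈ P, ∑ y ∈ T i, g i y
      ≤ ∑ i ∈ P, ∑ y ∈ T i with c * f i y ≤ g i y, f i y + c * ∑ i ∈ P, ∑ y ∈ T i, f i y := by
    rw [mul_sum, ← sum_add_distrib]
    exact sum_le_sum fun i _ => sum_le_sum_filter_add_mul_sum hc (hf i) (hgf i)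
  linarith [mul_le_mul_of_nonneg_left hK hc]

theorem exists_le_sum_fiber_of_card_image_le [DecidableEq β] [Nonempty β] {s : Finset ι}
    {m : ι → β} {w : ι → ℝ} {K b : ℝ} (hw : ∀ i ∈ s, 0 ≤ w i) (hK0 : 0 < K)
    (hK : ((s.image m).card : ℝ) ≤ K) (hb : K * b ≤ ∑ i ∈ s, w i) :
    ∃ y, b ≤ ∑ i ∈ s with m i = y, w i := by
  rcases le_or_gt b 0 with hb0 | hb0
  · exact ⟨Classical.arbitrary β, hb0.trans (sum_nonneg fun i hi => hw i (mem_filter.mp hi).1)⟩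
  have hs : s.Nonempty := by
    by_contra hs
    rw [not_nonempty_iff_eq_empty.mp hs, sum_empty] at hb
    linarith [mul_pos hK0 hb0]
  obtain ⟨y, -, hy⟩ := exists_le_sum_fiber_of_maps_to_of_nsmul_le_sum (w := w) (b := b)
    (fun i hi => mem_image_of_mem m hi) (hs.image m)
    (by rw [nsmul_eq_mul]; linarith [mul_le_mul_of_nonneg_right hK hb0.le])
  exact ⟨y, hy⟩

end ColumnExtraction

open Classical Finset in
theorem stmt17_general {X Y ι : Type}
    (μx : X → ℝ) (μy : Y → ℝ) (hx0 : ∀ x, 0 ≤ μx x) (hy0 : ∀ y, 0 ≤ μy y)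
    (P : Finset ι) (Xp : ι → Finset X) (Yp : ι → Finset Y)
    (mer : ι → List Bool) (Mmer : X → Y → List Bool)
    (S : Finset (X × Y)) (cM : ℕ) (δ : ℝ) (hδ : 0 ≤ δ)
    (Hdisj : ∑ π ∈ P, (∑ x ∈ Xp π, ∑ y ∈ Yp π, μx x * μy y) ≤ (2 : ℝ) ^ cM)
    (Hgood : δ ≤ ∑ π ∈ P, ∑ x ∈ Xp π, ∑ y ∈ Yp π,
      (if (x, y) ∈ S ∧ Mmer x y = mer π then μx x * μy y else 0))
    (Hmer : ((P.image mer).card : ℝ) ≤ (2 : ℝ) ^ cM) :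
    (δ / 2 ≤ ∑ π ∈ P, ∑ x ∈ Xp π, ∑ y ∈ (Yp π).filter (fun y =>
        δ / 2 * (2 : ℝ) ^ (-(cM : ℝ)) * ((∑ x' ∈ Xp π, μx x') * μy y) ≤
          (∑ x' ∈ (Xp π).filter (fun x' => (x', y) ∈ S ∧ Mmer x' y = mer π), μx x')
            * μy y), μx x * μy y)
    ∧ ∃ mh : List Bool,
        δ / 2 * (2 : ℝ) ^ (-(cM : ℝ)) ≤
          ∑ π ∈ P.filter (fun π => mer π = mh), ∑ x ∈ Xp π,
            ∑ y ∈ (Yp π).filter (fun y =>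
              δ / 2 * (2 : ℝ) ^ (-(cM : ℝ)) * ((∑ x' ∈ Xp π, μx x') * μy y) ≤
                (∑ x' ∈ (Xp π).filter (fun x' => (x', y) ∈ S ∧ Mmer x' y = mer π),
                  μx x') * μy y), μx x * μy y := by
  have hc : 0 ≤ δ / 2 * (2 : ℝ) ^ (-(cM : ℝ)) := by positivity
  have hKc : (2 : ℝ) ^ cM * (δ / 2 * (2 : ℝ) ^ (-(cM : ℝ))) = δ / 2 := by
    rw [Real.rpow_neg zero_le_two, Real.rpow_natCast]
    field_simp
  have hrect : ∀ π (B : Finset Y),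
      ∑ x ∈ Xp π, ∑ y ∈ B, μx x * μy y = ∑ y ∈ B, (∑ x ∈ Xp π, μx x) * μy y := by
    intro π B
    rw [sum_comm]
    simp only [sum_mul]
  have hgoodcols : ∀ π, ∑ x ∈ Xp π, ∑ y ∈ Yp π,
      (if (x, y) ∈ S ∧ Mmer x y = mer π then μx x * μy y else 0) =
        ∑ y ∈ Yp π, (∑ x ∈ Xp π with (x, y) ∈ S ∧ Mmer x y = mer π, μx x) * μy y := by
    intro π
    rw [sum_comm]
    simp only [sum_filter, sum_mul, ite_mul, zero_mul]
  simp only [hrect] at Hdisj ⊢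
  simp only [hgoodcols] at Hgood
  have hheavy := sub_mul_le_sum_sum_filter hc
    (fun π y => mul_nonneg (sum_nonneg fun x _ => hx0 x) (hy0 y))
    (fun π y => mul_le_mul_of_nonneg_right
      (sum_le_sum_of_subset_of_nonneg (filter_subset _ _) fun x _ _ => hx0 x) (hy0 y))
    Hdisj Hgood
  rw [mul_comm _ ((2 : ℝ) ^ cM), hKc, sub_half] at hheavy
  exact ⟨hheavy, exists_le_sum_fiber_of_card_image_le
    (fun π _ => sum_nonneg fun y _ => mul_nonneg (sum_nonneg fun x _ => hx0 x) (hy0 y))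
    (by positivity) Hmer (by rwa [hKc])⟩

open Classical Finset in
/-- Markov-type column extraction.  Given a product distribution `μx × μy`, a set
`S` of good input pairs of mass at least `δ`, and a family of rectangles
`R_π = X_π × Y_π` with Merlin messages `mer π` (at most `2^{c_M}` distinct ones),
such that `∑_π μ(R_π) ≤ 2^{c_M}` and
`∑_π μ(R_π ∩ S ∩ M_mer^{-1}(mer π)) ≥ δ`, letting `Ỹ_π` be the columns of
`R_π` on which the good pairs with matching Merlin message carry at least a
`(δ/2)·2^{−c_M}`-fraction of the mass, and `R̃_π = X_π × Ỹ_π`: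
`∑_π μ(R̃_π) ≥ δ/2`, and there is a single Merlin message `m̂` with
`∑_{π : mer π = m̂} μ(R̃_π) ≥ (δ/2)·2^{−c_M}`. -/
theorem stmt17 {X Y ι : Type} [Fintype X] [Fintype Y]
    (μx : X → ℝ) (μy : Y → ℝ) (hx0 : ∀ x, 0 ≤ μx x) (hy0 : ∀ y, 0 ≤ μy y)
    (P : Finset ι) (Xp : ι → Finset X) (Yp : ι → Finset Y)
    (mer : ι → List Bool) (Mmer : X → Y → List Bool)
    (S : Finset (X × Y)) (cM : ℕ) (δ : ℝ) (hδ : 0 ≤ δ)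
    (Hdisj : ∑ π ∈ P, (∑ x ∈ Xp π, ∑ y ∈ Yp π, μx x * μy y) ≤ (2 : ℝ) ^ cM)
    (Hgood : δ ≤ ∑ π ∈ P, ∑ x ∈ Xp π, ∑ y ∈ Yp π,
      (if (x, y) ∈ S ∧ Mmer x y = mer π then μx x * μy y else 0))
    (Hmer : ((P.image mer).card : ℝ) ≤ (2 : ℝ) ^ cM) :
    (δ / 2 ≤ ∑ π ∈ P, ∑ x ∈ Xp π, ∑ y ∈ (Yp π).filter (fun y =>
        δ / 2 * (2 : ℝ) ^ (-(cM : ℝ)) * ((∑ x' ∈ Xp π, μx x') * μy y) ≤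
          (∑ x' ∈ (Xp π).filter (fun x' => (x', y) ∈ S ∧ Mmer x' y = mer π), μx x')
            * μy y), μx x * μy y)
    ∧ ∃ mh : List Bool,
        δ / 2 * (2 : ℝ) ^ (-(cM : ℝ)) ≤
          ∑ π ∈ P.filter (fun π => mer π = mh), ∑ x ∈ Xp π,
            ∑ y ∈ (Yp π).filter (fun y =>
              δ / 2 * (2 : ℝ) ^ (-(cM : ℝ)) * ((∑ x' ∈ Xp π, μx x') * μy y) ≤
                (∑ x' ∈ (Xp π).filter (fun x' => (x', y) ∈ S ∧ Mmer x' y = mer π),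
                  μx x') * μy y), μx x * μy y :=
  stmt17_general μx μy hx0 hy0 P Xp Yp mer Mmer S cM δ hδ Hdisj Hgood Hmer
end

section
/- The probability that in every one of the 0.998B middle levels, at most q/16 of the q/8 sampled blocks have dominance vectors independent of all previous ones, is at most ((3√(kq)/(n²/4A))^{q/16}·2^{q/8})^{0.998B} ≤ (200·β^{−1/2}·log n)^{0.998·B·q/16} ≤ 2^{−0.031·q·log k}, for sufficiently large n. -/
/-!
If every level has at least `q/16` failures among its `q/8` blocks, then at least `L·q/16` of
the `L·q/8` events `Fail r` occur, so all events of some set `T` of exactly that size occur.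
Listing `T` lexicographically and peeling off its largest element, the conditional bound gives
`P(⋂_{r ∈ T} Fail r) ≤ ε ^ |T|`; a union bound over the at most `2 ^ (L·q/8)` choices of `T`
gives the first inequality. The other two are arithmetic: `4ε ≤ 200·β^(-1/2)·log n`, whose
`log₂` is at most `-498·log log n` since `β ≥ log^999 n`, while `B·log log n ≈ log k / 997`.
-/

open Finset

theorem sum_union_le_of_nonneg {Ω : Type*} [DecidableEq Ω] {μ : Ω → ℝ} (hμ : ∀ ω, 0 ≤ μ ω)
    (s t : Finset Ω) : ∑ ω ∈ s ∪ t, μ ω ≤ ∑ ω ∈ s, μ ω + ∑ ω ∈ t, μ ω := by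
  rw [← sum_union_inter]
  exact le_add_of_nonneg_right (sum_nonneg fun ω _ => hμ ω)

theorem card_filter_prod_eq_sum {α β : Type*} [Fintype α] [Fintype β] (p : α × β → Prop)
    [DecidablePred p] : #{i | p i} = ∑ a, #{b | p (a, b)} := by
  simp only [card_filter, Fintype.sum_prod_type]

section Events

variable {Ω : Type*} [Fintype Ω] [DecidableEq Ω] (μ : Ω → ℝ) {ε : ℝ}

theorem sum_inf_le_pow_card_mul {ι κ : Type*} [LinearOrder κ] {f : ι → κ}
    (hf : Function.Injective f) (E : ι → Finset Ω) (hε : 0 ≤ ε)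
    (hE : ∀ p (S : Finset ι), (∀ r ∈ S, f r < f p) →
      ∑ ω ∈ E p ∩ S.inf E, μ ω ≤ ε * ∑ ω ∈ S.inf E, μ ω)
    (S : Finset ι) : ∑ ω ∈ S.inf E, μ ω ≤ ε ^ #S * ∑ ω, μ ω := by
  classical
  induction S using Finset.induction_on_max_value f with
  | empty => simp
  | insert p S hp hle ih =>
    have hlt : ∀ r ∈ S, f r < f p := fun r hr =>
      (hle r hr).lt_of_ne (hf.ne fun h => hp (h ▸ hr))
    rw [inf_insert, inf_eq_inter, card_insert_of_notMem hp, pow_succ', mul_assoc]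
    exact (hE p S hlt).trans (mul_le_mul_of_nonneg_left ih hε)

theorem Prod.sum_inf_le_pow_card_mul {α β : Type*} [LinearOrder α] [LinearOrder β]
    (E : α × β → Finset Ω) (hε : 0 ≤ ε)
    (hE : ∀ p (S : Finset (α × β)), (∀ r ∈ S, r.1 < p.1 ∨ r.1 = p.1 ∧ r.2 < p.2) →
      ∑ ω ∈ E p ∩ S.inf E, μ ω ≤ ε * ∑ ω ∈ S.inf E, μ ω)
    (S : Finset (α × β)) : ∑ ω ∈ S.inf E, μ ω ≤ ε ^ #S * ∑ ω, μ ω :=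
  _root_.sum_inf_le_pow_card_mul μ toLex.injective E hε
    (fun p S hS => hE p S fun r hr => Prod.Lex.toLex_lt_toLex.1 (hS r hr)) S

theorem sum_filter_le_card_le_sum_powersetCard {ι : Type*} [Fintype ι] (E : ι → Finset Ω)
    (hμ : ∀ ω, 0 ≤ μ ω) (j : ℕ) :
    ∑ ω with j ≤ #{i | ω ∈ E i}, μ ω ≤ ∑ T ∈ powersetCard j univ, ∑ ω ∈ T.inf E, μ ω := by
  calc _ ≤ ∑ ω ∈ (powersetCard j univ).sup fun T => T.inf E, μ ω := by
        refine sum_le_sum_of_subset_of_nonneg (fun ω hω => ?_) fun ω _ _ => hμ ω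
        obtain ⟨T, hT, hcard⟩ := exists_subset_card_eq (mem_filter.1 hω).2
        exact mem_sup.2 ⟨T, mem_powersetCard.2 ⟨subset_univ T, hcard⟩,
          mem_inf.2 fun i hi => (mem_filter.1 (hT hi)).2⟩
    _ ≤ _ := apply_sup_le_sum (f := fun s => ∑ ω ∈ s, μ ω) (by simp)
        (sum_union_le_of_nonneg hμ _ _) _

theorem sum_filter_forall_rows_le {α β : Type*} [Fintype α] [Fintype β] [LinearOrder α]
    [LinearOrder β] (E : α × β → Finset Ω) (hμ : ∀ ω, 0 ≤ μ ω) (hε : 0 ≤ ε)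
    (hE : ∀ p (S : Finset (α × β)), (∀ r ∈ S, r.1 < p.1 ∨ r.1 = p.1 ∧ r.2 < p.2) →
      ∑ ω ∈ E p ∩ S.inf E, μ ω ≤ ε * ∑ ω ∈ S.inf E, μ ω)
    (m : ℕ) :
    ∑ ω with ∀ a, m ≤ #{b | ω ∈ E (a, b)}, μ ω ≤
      (ε ^ m * 2 ^ Fintype.card β) ^ Fintype.card α * ∑ ω, μ ω := by
  set j := Fintype.card α * m
  have hrows : ({ω | ∀ a, m ≤ #{b | ω ∈ E (a, b)}} : Finset Ω) ⊆
      ({ω | j ≤ #{i | ω ∈ E i}} : Finset Ω) := by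
    intro ω hω
    simp only [mem_filter, mem_univ, true_and] at hω ⊢
    rw [card_filter_prod_eq_sum]
    simpa [j, mul_comm] using card_nsmul_le_sum univ _ m fun a _ => hω a
  have htotal : 0 ≤ ∑ ω, μ ω := sum_nonneg fun ω _ => hμ ω
  calc _ ≤ ∑ ω with j ≤ #{i | ω ∈ E i}, μ ω :=
        sum_le_sum_of_subset_of_nonneg hrows fun ω _ _ => hμ ω
    _ ≤ ∑ T ∈ powersetCard j univ, ∑ ω ∈ T.inf E, μ ω :=
        sum_filter_le_card_le_sum_powersetCard μ E hμ j
    _ ≤ #(powersetCard j (univ : Finset (α × β))) • (ε ^ j * ∑ ω, μ ω) :=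
        sum_le_card_nsmul _ _ _ fun T hT => by
          simpa [(mem_powersetCard.1 hT).2] using Prod.sum_inf_le_pow_card_mul μ E hε hE T
    _ ≤ (2 ^ (Fintype.card α * Fintype.card β) : ℕ) • (ε ^ j * ∑ ω, μ ω) := by
        rw [card_powersetCard, card_univ, Fintype.card_prod]
        exact nsmul_le_nsmul_left (mul_nonneg (pow_nonneg hε j) htotal) (Nat.choose_le_two_pow _ _)
    _ = _ := by
        simp only [nsmul_eq_mul, j, pow_mul, mul_pow]
        push_cast
        ring

end Events

section Estimates

open Real

theorem rpow_mul_two_rpow_two_mul {ε : ℝ} (hε : 0 ≤ ε) (y : ℝ) :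
    ε ^ y * 2 ^ (2 * y) = (4 * ε) ^ y := by
  rw [rpow_mul (by norm_num), mul_comm 4 ε, mul_rpow hε (by norm_num)]
  norm_num

theorem rpow_le_two_rpow_of_logb_mul_le {b E c : ℝ} (hb : 0 < b) (h : logb 2 b * E ≤ c) :
    b ^ E ≤ 2 ^ c := by
  rw [← rpow_logb (b := 2) (by norm_num) (by norm_num) hb, ← rpow_mul (by norm_num)]
  exact rpow_le_rpow_of_exponent_le one_le_two h

theorem two_pow_sixteen_le_logb_and_sixteen_le_logb_logb {x : ℝ} (hx : 2 ^ 2 ^ 16 ≤ x) :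
    2 ^ 16 ≤ logb 2 x ∧ 16 ≤ logb 2 (logb 2 x) := by
  have hlogx : 2 ^ 16 ≤ logb 2 x := by
    rw [le_logb_iff_rpow_le one_lt_two ((by positivity : (0 : ℝ) < 2 ^ 2 ^ 16).trans_le hx)]
    exact_mod_cast hx
  refine ⟨hlogx, ?_⟩
  rw [le_logb_iff_rpow_le one_lt_two ((by positivity : (0 : ℝ) < 2 ^ 16).trans_le hlogx)]
  exact_mod_cast hlogx

theorem four_mul_div_le_rpow_neg_half {n k q A ℓ : ℝ} (hn : 0 < n) (hk : 0 < k) (hq : 0 < q)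
    (hℓ : 0 ≤ ℓ) (hAk : A ≤ 4.1 * n ^ 2 * ℓ / k) :
    4 * (3 * √(k * q) / (n ^ 2 / (4 * A))) ≤ 200 * (k / q) ^ (-(1 / 2 : ℝ)) * ℓ := by
  have hsqrt : (k / q) ^ (-(1 / 2 : ℝ)) = √q / √k := by
    rw [rpow_neg (by positivity), ← sqrt_eq_rpow, ← sqrt_inv, inv_div, sqrt_div' _ hk.le]
  have hAk' : A * (√k * √k) ≤ 4.1 * n ^ 2 * ℓ := by
    rw [mul_self_sqrt hk.le]
    exact (le_div_iff₀ hk).1 hAk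
  have hsk : 0 < √k := sqrt_pos.2 hk
  rw [hsqrt, sqrt_mul hk.le]
  field_simp
  nlinarith [mul_le_mul_of_nonneg_left hAk' (sqrt_nonneg q),
    mul_nonneg (sqrt_nonneg q) (mul_nonneg (sq_nonneg n) hℓ)]

theorem logb_two_mul_rpow_neg_half_le {x ℓ : ℝ} (hℓ : 0 < ℓ) (hℓ16 : 16 ≤ logb 2 ℓ)
    (hx : ℓ ^ 999 ≤ x) : logb 2 (200 * x ^ (-(1 / 2 : ℝ)) * ℓ) ≤ -498 * logb 2 ℓ := by
  have hx0 : 0 < x := (pow_pos hℓ 999).trans_le hx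
  have h200 : logb 2 200 ≤ 8 := by
    rw [logb_le_iff_le_rpow one_lt_two (by norm_num)]
    norm_num
  have hlogx : 999 * logb 2 ℓ ≤ logb 2 x := by
    simpa [logb_pow] using logb_le_logb_of_le one_lt_two (pow_pos hℓ 999) hx
  rw [logb_mul (by positivity) hℓ.ne', logb_mul (by norm_num) (by positivity),
    logb_rpow_eq_mul_logb_of_pos hx0]
  linarith

theorem rpow_mul_two_rpow_pow_le_rpow {ε b q B : ℝ} {L : ℕ} (hε : 0 ≤ ε) (hεb : 4 * ε ≤ b)
    (hb0 : 0 < b) (hb1 : b ≤ 1) (hq : 0 ≤ q) (hL : 0.998 * B ≤ L) :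
    (ε ^ (q / 16) * 2 ^ (q / 8)) ^ L ≤ b ^ (0.998 * B * q / 16) := by
  rw [show q / 8 = 2 * (q / 16) by ring, rpow_mul_two_rpow_two_mul hε, ← rpow_natCast,
    ← rpow_mul (by positivity)]
  calc (4 * ε) ^ (q / 16 * L) ≤ b ^ (q / 16 * L) := rpow_le_rpow (by positivity) hεb (by positivity)
    _ ≤ b ^ (0.998 * B * q / 16) := rpow_le_rpow_of_exponent_ge hb0 hb1 (by nlinarith)

theorem rpow_le_two_rpow_of_logb_le_neg_mul {b B q ℓ t : ℝ} (hb : 0 < b)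
    (hlogb : logb 2 b ≤ -498 * ℓ) (hB : 0.999 * t ≤ B * (997 * ℓ)) (hB0 : 0 ≤ B) (hq : 0 ≤ q)
    (ht : 0 ≤ t) : b ^ (0.998 * B * q / 16) ≤ 2 ^ (-0.031 * q * t) := by
  refine rpow_le_two_rpow_of_logb_mul_le hb ?_
  have hE : 0 ≤ 0.998 * B * q / 16 := by positivity
  nlinarith [mul_le_mul_of_nonneg_right hlogb hE, mul_le_mul_of_nonneg_left hB hq,
    mul_nonneg hq ht]

end Estimates

open Classical Real Finset in
/-- Probability that every sampled hitting pattern yields few new independent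
constraints.  In each of the `L ≥ 0.998·B` middle levels, `q/8` blocks are
sampled one by one; each sampled block's dominance vector is linearly
independent from all previously collected vectors except with (conditional)
probability at most `ε = 3√(kq)/(n²/4A)`.  The probability that in *every* level
at most `q/16` of the `q/8` sampled blocks are independent (i.e. at least `q/16`
fail) is at most `(ε^{q/16}·2^{q/8})^L ≤ (200·β^{−1/2}·log n)^{0.998·B·q/16}
≤ 2^{−0.031·q·log k}`, where `β = k/q`. -/
theorem stmt18 :
    ∃ N : ℕ, ∀ n ≥ N, ∀ k q A B L : ℕ,
      16 ∣ q → 1 ≤ q → Real.sqrt n ≤ (k : ℝ) →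
      (q : ℝ) * (Real.logb 2 n) ^ 999 ≤ (k : ℝ) →
      (k : ℝ) ≤ (q : ℝ) * (Real.logb 2 n) ^ 1001 →
      3.9 * (n : ℝ) ^ 2 * Real.logb 2 n / (k : ℝ) ≤ (A : ℝ) →
      (A : ℝ) ≤ 4.1 * (n : ℝ) ^ 2 * Real.logb 2 n / (k : ℝ) →
      0.999 * Real.logb 2 k / (997 * Real.logb 2 (Real.logb 2 n)) ≤ (B : ℝ) →
      (B : ℝ) ≤ 1.001 * Real.logb 2 k / (997 * Real.logb 2 (Real.logb 2 n)) →
      0.998 * (B : ℝ) ≤ (L : ℝ) →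
      ∀ (Ω : Type) [Fintype Ω] (μ : Ω → ℝ)
        (Fail : Fin L × Fin (q / 8) → Finset Ω),
      (∀ ω, 0 ≤ μ ω) → (∑ ω, μ ω = 1) →
      -- conditional failure probability at most ε given any earlier failures
      (∀ p : Fin L × Fin (q / 8), ∀ S : Finset (Fin L × Fin (q / 8)),
        (∀ r ∈ S, r.1 < p.1 ∨ (r.1 = p.1 ∧ r.2 < p.2)) →
        ∑ ω ∈ Finset.univ.filter (fun ω => ω ∈ Fail p ∧ ∀ r ∈ S, ω ∈ Fail r), μ ω ≤
          (3 * Real.sqrt ((k : ℝ) * q) / ((n : ℝ) ^ 2 / (4 * A))) *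
            ∑ ω ∈ Finset.univ.filter (fun ω => ∀ r ∈ S, ω ∈ Fail r), μ ω) →
      (∑ ω ∈ Finset.univ.filter (fun ω => ∀ ℓ : Fin L,
          (q : ℝ) / 16 ≤
            ((Finset.univ.filter (fun s : Fin (q / 8) => ω ∈ Fail (ℓ, s))).card : ℝ)),
          μ ω ≤
        ((3 * Real.sqrt ((k : ℝ) * q) / ((n : ℝ) ^ 2 / (4 * A))) ^ ((q : ℝ) / 16)
          * 2 ^ ((q : ℝ) / 8)) ^ L)
      ∧ (((3 * Real.sqrt ((k : ℝ) * q) / ((n : ℝ) ^ 2 / (4 * A))) ^ ((q : ℝ) / 16)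
            * 2 ^ ((q : ℝ) / 8)) ^ L ≤
          (200 * ((k : ℝ) / q) ^ (-(1 / 2 : ℝ)) * Real.logb 2 n) ^
            (0.998 * (B : ℝ) * (q : ℝ) / 16))
      ∧ ((200 * ((k : ℝ) / q) ^ (-(1 / 2 : ℝ)) * Real.logb 2 n) ^
            (0.998 * (B : ℝ) * (q : ℝ) / 16) ≤
          (2 : ℝ) ^ (-(0.031 : ℝ) * q * Real.logb 2 k)) := by
  -- `log log n ≥ 16` absorbs the constant `200` and the extra factor `log n` in the base
  refine ⟨2 ^ 2 ^ 16, fun n hn k q A B L h16 hq hk hkq _ _ hA hB _ hL Ω _ μ Fail hμ hμ1 hcond => ?_⟩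
  set ε := 3 * √((k : ℝ) * q) / ((n : ℝ) ^ 2 / (4 * A))
  set b := 200 * ((k : ℝ) / q) ^ (-(1 / 2 : ℝ)) * logb 2 n
  have hn0 : (0 : ℝ) < n := by exact_mod_cast (Nat.two_pow_pos _).trans_le hn
  obtain ⟨hlogn, hloglogn⟩ := two_pow_sixteen_le_logb_and_sixteen_le_logb_logb (x := n)
    (by exact_mod_cast hn)
  have hq0 : (0 : ℝ) < q := by exact_mod_cast hq
  have hk0 : (0 : ℝ) < k := (sqrt_pos.2 hn0).trans_le hk
  have hb0 : 0 < b := by positivity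
  have hlogb : logb 2 b ≤ -498 * logb 2 (logb 2 n) :=
    logb_two_mul_rpow_neg_half_le (by positivity) hloglogn ((le_div_iff₀ hq0).2 (by linarith))
  have hb1 : b ≤ 1 := (logb_nonpos_iff one_lt_two hb0).1 (by linarith)
  have hε0 : 0 ≤ ε := by positivity
  refine ⟨?_, rpow_mul_two_rpow_pow_le_rpow hε0
    (four_mul_div_le_rpow_neg_half hn0 hk0 hq0 (by positivity) hA) hb0 hb1 hq0.le hL,
    rpow_le_two_rpow_of_logb_le_neg_mul hb0 hlogb ((div_le_iff₀ (by positivity)).1 hB)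
      (Nat.cast_nonneg B) hq0.le (logb_nonneg one_lt_two (by exact_mod_cast hk0))⟩
  have hcond' : ∀ p (S : Finset (Fin L × Fin (q / 8))),
      (∀ r ∈ S, r.1 < p.1 ∨ r.1 = p.1 ∧ r.2 < p.2) →
      ∑ ω ∈ Fail p ∩ S.inf Fail, μ ω ≤ ε * ∑ ω ∈ S.inf Fail, μ ω := fun p S hS => by
    convert hcond p S hS using 3 <;> ext <;> simp [mem_inf]
  have h16R : (q : ℝ) / 16 = (q / 16 : ℕ) := by
    rw [Nat.cast_div h16 (by norm_num)]; norm_num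
  have h8R : (q : ℝ) / 8 = (q / 8 : ℕ) := by
    rw [Nat.cast_div (dvd_trans ⟨2, rfl⟩ h16) (by norm_num)]; norm_num
  rw [h16R, h8R, rpow_natCast, rpow_natCast]
  convert sum_filter_forall_rows_le μ Fail hμ hε0 hcond' (q / 16) using 2
  · ext; simp
  · simp [hμ1]
end

section
/- Under the above hypotheses, E[L] ≥ √(k/q)·(1−o(1))·q/16 ≥ 0.06·√(kq). Consequently, the expected encoding length 2k log n + 0.027·√(kq)·log n + (k − E[L])·log n is at most 3k·log n − 0.033·√(kq)·log n, which implies |X̄| ≤ 2^{3k log n − 0.033√(kq) log n} and μ_x(X̄) ≤ 2^{−0.033·√(kq)·log n} under the uniform distribution μ_x over weighted point tuples (n^{3k} possibilities). -/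
/-!
Each of the `R ≥ √(k/q)` repetitions gains at least `q/16` constraints with probability at
least `1 - ε`, where `ε = 2^{-0.031 q log k} / (p/2) ≤ 2^{-0.0015 q log n}` is tiny once `n` is
large (`log k ≥ (log n)/2`). By a Markov-type bound each repetition contributes
`(1 - ε) q/16` in expectation, so `E[L] ≥ 0.99 · √(k/q) · q/16 ≥ 0.06 √(kq)`. The encoding
length bound is then linear arithmetic, and `|X̄| ≤ 2^{3k log n - 0.033 √(kq) log n}` divided by
`n^{3k} = 2^{3k log n}` gives the density bound.
-/

open Real Finset

lemma mul_le_sum_mul_of_le_sum_filter {Ω : Type*} [Fintype Ω] {μ : Ω → ℝ}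
    (hμ : ∀ ω, 0 ≤ μ ω) (g : Ω → ℕ) (m : ℕ) {a : ℝ}
    (ha : a ≤ ∑ ω ∈ univ.filter (fun ω => m ≤ g ω), μ ω) :
    a * m ≤ ∑ ω, μ ω * g ω :=
  calc a * m ≤ (∑ ω ∈ univ.filter (fun ω => m ≤ g ω), μ ω) * m := by gcongr
    _ = ∑ ω ∈ univ.filter (fun ω => m ≤ g ω), μ ω * m := sum_mul ..
    _ ≤ ∑ ω ∈ univ.filter (fun ω => m ≤ g ω), μ ω * g ω :=
      sum_le_sum fun ω hω => by
        have := hμ ω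
        gcongr
        exact_mod_cast (mem_filter.1 hω).2
    _ ≤ ∑ ω, μ ω * g ω :=
      sum_le_sum_of_subset_of_nonneg (filter_subset _ _) fun ω _ _ => by
        have := hμ ω; positivity

lemma mul_card_mul_le_sum_sum_of_le_sum_filter {ι Ω : Type*} [Fintype ι] [Fintype Ω]
    {μ : Ω → ℝ} (hμ : ∀ ω, 0 ≤ μ ω) (g : ι → Ω → ℕ) (m : ℕ) {a : ℝ}
    (ha : ∀ j, a ≤ ∑ ω ∈ univ.filter (fun ω => m ≤ g j ω), μ ω) :
    a * Fintype.card ι * m ≤ ∑ j, ∑ ω, μ ω * g j ω :=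
  calc a * Fintype.card ι * m = ∑ _j : ι, a * m := by simp; ring
    _ ≤ ∑ j, ∑ ω, μ ω * g j ω :=
      sum_le_sum fun j _ => mul_le_sum_mul_of_le_sum_filter hμ (g j) m (ha j)

lemma rpow_div_le_rpow_sub {b x y c : ℝ} (hb : 0 < b) (hc : b ^ y ≤ c) :
    b ^ x / c ≤ b ^ (x - y) := by
  rw [rpow_sub hb]
  exact div_le_div_of_nonneg_left (rpow_nonneg hb.le x) (rpow_pos_of_pos hb y) hc

lemma half_logb_le_logb_of_sqrt_le {b x y : ℝ} (hb : 1 < b) (hx : 0 < x) (h : √x ≤ y) :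
    logb b x / 2 ≤ logb b y := by
  calc logb b x / 2 = logb b √x := by rw [logb, logb, log_sqrt hx.le]; ring
    _ ≤ logb b y := logb_le_logb_of_le hb (sqrt_pos.2 hx) h

lemma sqrt_div_mul_self {x y : ℝ} (hx : 0 ≤ x) (hy : 0 ≤ y) : √(x / y) * y = √(x * y) := by
  rcases hy.eq_or_lt with rfl | hy
  · simp
  · calc √(x / y) * y = √(x / y * (y * y)) := by
          rw [sqrt_mul (div_nonneg hx hy.le), sqrt_mul_self hy.le]
      _ = √(x * y) := by field_simp

lemma le_rpow_of_logb_le {b x y : ℝ} (hb : 1 < b) (hx : 0 ≤ x) (h : logb b x ≤ y) :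
    x ≤ b ^ y := by
  rcases hx.eq_or_lt with rfl | hx
  · exact (rpow_pos_of_pos (by linarith) y).le
  · exact (logb_le_iff_le_rpow hb hx).1 h

lemma rpow_natCast_mul_logb_add {b x : ℝ} (hb : 0 < b) (hb1 : b ≠ 1) (hx : 0 < x) (m : ℕ)
    (s : ℝ) : b ^ (logb b x * m + s) = x ^ m * b ^ s := by
  rw [rpow_add hb, rpow_mul hb.le, rpow_logb hb hb1 hx, rpow_natCast]

lemma rpow_div_half_le_one_hundredth {q Lk Ln p : ℝ} (hq : 1 ≤ q) (hLn : 5000 ≤ Ln)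
    (hLk : Ln / 2 ≤ Lk) (hp : (2 : ℝ) ^ (-0.026 * q * Lk - 0.001 * q * Ln) ≤ p / 2) :
    (2 : ℝ) ^ (-0.031 * q * Lk) / (p / 2) ≤ 0.01 :=
  have hexp : -0.031 * q * Lk - (-0.026 * q * Lk - 0.001 * q * Ln) ≤ -7.5 := by
    nlinarith [mul_le_mul_of_nonneg_left hLk (by linarith : (0 : ℝ) ≤ q)]
  calc (2 : ℝ) ^ (-0.031 * q * Lk) / (p / 2)
      ≤ 2 ^ (-0.031 * q * Lk - (-0.026 * q * Lk - 0.001 * q * Ln)) :=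
        rpow_div_le_rpow_sub two_pos hp
    _ ≤ 2 ^ (-7 : ℝ) := rpow_le_rpow_of_exponent_le one_le_two (by linarith)
    _ ≤ 0.01 := by norm_num

lemma mul_sqrt_mul_le_of_sqrt_div_le {k q R ε : ℝ} (hk : 0 ≤ k) (hq : 0 ≤ q) (hε : ε ≤ 0.01)
    (hR : √(k / q) ≤ R) : 0.06 * √(k * q) ≤ (1 - ε) * R * (q / 16) :=
  calc 0.06 * √(k * q) ≤ 0.99 / 16 * √(k * q) := by gcongr; norm_num
    _ = 0.99 * √(k / q) * (q / 16) := by rw [← sqrt_div_mul_self hk hq]; ring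
    _ ≤ (1 - ε) * R * (q / 16) := by gcongr; all_goals linarith

open Classical Real Finset in
/-- Expected number of independent linear constraints.  The encoding scheme
repeats Step 2 for `R ≈ √(k/q)` times; each repetition yields at least `q/16`
new linearly independent constraints except with probability
`2^{−0.031·q·log k}/(p/2)` (where `p/2 ≥ 2^{−0.026·q·log k − 0.001·q·log n}` is
the per-repetition success probability).  Hence, for `L = ∑_j gain_j`,
`E[L] ≥ R·(1−o(1))·q/16 ≥ 0.06·√(kq)`; consequently the expected encoding
length `2k·log n + 0.027·√(kq)·log n + (k − E[L])·log n` is at most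
`3k·log n − 0.033·√(kq)·log n`, which implies
`|X̄| ≤ 2^{3k·log n − 0.033·√(kq)·log n}` and
`μx(X̄) ≤ 2^{−0.033·√(kq)·log n}` under the uniform distribution over the
`n^{3k}` weighted point tuples. -/
theorem stmt19 :
    ∃ N : ℕ, ∀ n ≥ N, ∀ k q R : ℕ,
      16 ∣ q → 1 ≤ q → Real.sqrt n ≤ (k : ℝ) →
      (q : ℝ) * (Real.logb 2 n) ^ 999 ≤ (k : ℝ) →
      (k : ℝ) ≤ (q : ℝ) * (Real.logb 2 n) ^ 1001 →
      Real.sqrt ((k : ℝ) / q) ≤ (R : ℝ) →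
      (R : ℝ) ≤ Real.sqrt ((k : ℝ) / q) + 1 →
      ∀ (Ω : Type) [Fintype Ω] (μ : Ω → ℝ) (gain : Fin R → Ω → ℕ) (p : ℝ),
      (∀ ω, 0 ≤ μ ω) → (∑ ω, μ ω = 1) → 0 < p → p ≤ 1 →
      (2 : ℝ) ^ (-(0.026 : ℝ) * q * Real.logb 2 k - 0.001 * q * Real.logb 2 n) ≤ p / 2 →
      (∀ j : Fin R,
        1 - (2 : ℝ) ^ (-(0.031 : ℝ) * q * Real.logb 2 k) / (p / 2) ≤
          ∑ ω ∈ Finset.univ.filter (fun ω => q / 16 ≤ gain j ω), μ ω) →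
      ((1 - (2 : ℝ) ^ (-(0.031 : ℝ) * q * Real.logb 2 k) / (p / 2)) * R * ((q : ℝ) / 16)
          ≤ ∑ j : Fin R, ∑ ω : Ω, μ ω * (gain j ω : ℝ))
      ∧ (0.06 * Real.sqrt ((k : ℝ) * q) ≤ ∑ j : Fin R, ∑ ω : Ω, μ ω * (gain j ω : ℝ))
      ∧ (2 * (k : ℝ) * Real.logb 2 n + 0.027 * Real.sqrt ((k : ℝ) * q) * Real.logb 2 n
            + ((k : ℝ) - ∑ j : Fin R, ∑ ω : Ω, μ ω * (gain j ω : ℝ)) * Real.logb 2 n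
          ≤ 3 * (k : ℝ) * Real.logb 2 n
            - 0.033 * Real.sqrt ((k : ℝ) * q) * Real.logb 2 n)
      ∧ ∀ (XT : Type) (Xb : Finset XT),
          Real.logb 2 (Xb.card) ≤
            2 * (k : ℝ) * Real.logb 2 n + 0.027 * Real.sqrt ((k : ℝ) * q) * Real.logb 2 n
              + ((k : ℝ) - ∑ j : Fin R, ∑ ω : Ω, μ ω * (gain j ω : ℝ)) * Real.logb 2 n →
          (Xb.card : ℝ) ≤
            2 ^ (3 * (k : ℝ) * Real.logb 2 n
              - 0.033 * Real.sqrt ((k : ℝ) * q) * Real.logb 2 n)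
          ∧ (Xb.card : ℝ) / (n : ℝ) ^ (3 * k) ≤
            2 ^ (-(0.033 : ℝ) * Real.sqrt ((k : ℝ) * q) * Real.logb 2 n) := by
  refine ⟨2 ^ 5000, fun n hn k q R hq16 hq1 hsqrtn _ _ hR _ Ω _ μ gain p hμ _ _ _ hpge hgain => ?_⟩
  have hn0 : (0 : ℝ) < n := Nat.cast_pos.2 (lt_of_lt_of_le (by positivity) hn)
  have hLn : 5000 ≤ logb 2 n := (le_logb_iff_rpow_le one_lt_two hn0).2 (by
    rw [show (5000 : ℝ) = (5000 : ℕ) by norm_num, rpow_natCast]; exact_mod_cast hn)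
  have hε := rpow_div_half_le_one_hundredth (by exact_mod_cast hq1) hLn
    (half_logb_le_logb_of_sqrt_le one_lt_two hn0 hsqrtn) hpge
  have hE1 := mul_card_mul_le_sum_sum_of_le_sum_filter hμ gain (q / 16) hgain
  rw [Fintype.card_fin, Nat.cast_div hq16 (by norm_num), Nat.cast_ofNat] at hE1
  have hE := (mul_sqrt_mul_le_of_sqrt_div_le k.cast_nonneg q.cast_nonneg hε hR).trans hE1
  have hlen := mul_le_mul_of_nonneg_right hE (by linarith : 0 ≤ logb 2 n)
  refine ⟨hE1, hE, by linarith, fun XT Xb hcard => ?_⟩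
  have hX : (Xb.card : ℝ) ≤ 2 ^ (3 * (k : ℝ) * logb 2 n - 0.033 * √((k : ℝ) * q) * logb 2 n) :=
    le_rpow_of_logb_le one_lt_two (Nat.cast_nonneg _) (hcard.trans (by linarith))
  refine ⟨hX, ?_⟩
  have hsplit : (2 : ℝ) ^ (3 * (k : ℝ) * logb 2 n - 0.033 * √((k : ℝ) * q) * logb 2 n) =
      (n : ℝ) ^ (3 * k) * 2 ^ (-(0.033 : ℝ) * √((k : ℝ) * q) * logb 2 n) := by
    rw [← rpow_natCast_mul_logb_add two_pos (by norm_num) hn0]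
    push_cast
    ring_nf
  rw [div_le_iff₀ (by positivity), mul_comm, ← hsplit]
  exact hX
end
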